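/- arXiv:2207.12479 — 8 statements merged into one kernel-verified Lean document; each statement's English description precedes it below -/
import Mathlib

section
/- Under the positivity, randomization and modularity assumptions, the experimental (target-trial) law factorizes according to the g-formula with randomized assignment: for all y, t, x, P_E(Y=y, T=t, X=x) = P_O(Y=y | T=t, X=x) · P_E(T=t) · P_O(X=x), where for x with P_O(X=x)=0 both sides are zero. -/
/-!
Where `P_O(T=t, X=x) > 0`, cross-multiplied modularity can be divided through, and randomization
together with `P_E(X=x) = P_O(X=x)` turns `P_E(T=t, X=x)` into `P_E(T=t) · P_O(X=x)`. Positivity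
guarantees `P_O(T=t, X=x) > 0` for both treatments whenever `P_O(X=x) > 0`; where `P_O(X=x) = 0`,
also `P_E(X=x) = 0`, so nonnegativity kills `P_E(y, t, x)`.
-/

open scoped BigOperators

noncomputable section

variable {𝒴 𝒳 : Type*} [Countable 𝒴] [Countable 𝒳]

/-- Marginal mass of `X = x`. -/
def margX (P : 𝒴 × Bool × 𝒳 → ℝ) (x : 𝒳) : ℝ :=
  ∑' y : 𝒴, ∑' t : Bool, P (y, t, x)

/-- Marginal mass of `T = t`. -/
def margT (P : 𝒴 × Bool × 𝒳 → ℝ) (t : Bool) : ℝ :=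
  ∑' y : 𝒴, ∑' x : 𝒳, P (y, t, x)

/-- Joint mass of `T = t, X = x`. -/
def margTX (P : 𝒴 × Bool × 𝒳 → ℝ) (t : Bool) (x : 𝒳) : ℝ :=
  ∑' y : 𝒴, P (y, t, x)

section Marginals

variable {α β : Type*} {P : α × Bool × β → ℝ}

theorem summable_slice (hP : Summable P) (t : Bool) (x : β) :
    Summable fun y : α => P (y, t, x) :=
  hP.comp_injective fun _ _ h => by simpa using h

theorem margX_eq_margTX_false_add_margTX_true (hP : Summable P) (x : β) :
    margX P x = margTX P false x + margTX P true x := by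
  simp only [margX, margTX, tsum_bool]
  exact (summable_slice hP false x).tsum_add (summable_slice hP true x)

theorem margTX_nonneg (hP₀ : ∀ z, 0 ≤ P z) (t : Bool) (x : β) : 0 ≤ margTX P t x :=
  tsum_nonneg fun _ => hP₀ _

theorem margX_nonneg (hP₀ : ∀ z, 0 ≤ P z) (x : β) : 0 ≤ margX P x :=
  tsum_nonneg fun _ => tsum_nonneg fun _ => hP₀ _

theorem le_margTX (hP : Summable P) (hP₀ : ∀ z, 0 ≤ P z) (y : α) (t : Bool) (x : β) :
    P (y, t, x) ≤ margTX P t x :=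
  (summable_slice hP t x).le_tsum y fun _ _ => hP₀ _

theorem margTX_le_margX (hP : Summable P) (hP₀ : ∀ z, 0 ≤ P z) (t : Bool) (x : β) :
    margTX P t x ≤ margX P x := by
  rw [margX_eq_margTX_false_add_margTX_true hP]
  cases t <;> linarith [margTX_nonneg hP₀ false x, margTX_nonneg hP₀ true x]

theorem eq_zero_of_margX_eq_zero (hP : Summable P) (hP₀ : ∀ z, 0 ≤ P z) {x : β}
    (hx : margX P x = 0) (y : α) (t : Bool) : P (y, t, x) = 0 :=
  le_antisymm ((le_margTX hP hP₀ y t x).trans (hx ▸ margTX_le_margX hP hP₀ t x)) (hP₀ _)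

theorem margTX_pos_of_propensity_mem_Ioo (hP : Summable P) {x : β}
    (hx : 0 < margX P x) (hprop : 0 < margTX P true x / margX P x ∧
      margTX P true x / margX P x < 1) (t : Bool) :
    0 < margTX P t x := by
  obtain ⟨hpos, hlt⟩ := hprop
  have htrue : 0 < margTX P true x := (div_pos_iff_of_pos_right hx).mp hpos
  have hfalse : 0 < margTX P false x := by
    have := margX_eq_margTX_false_add_margTX_true hP x
    linarith [(div_lt_one hx).mp hlt]
  cases t <;> assumption

end Marginals

theorem g_formula_with_randomized_assignment_general
    (P_O P_E : 𝒴 × Bool × 𝒳 → ℝ)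
    (hO_nonneg : ∀ z, 0 ≤ P_O z) (hO_sum : HasSum P_O 1)
    (hE_nonneg : ∀ z, 0 ≤ P_E z) (hE_sum : HasSum P_E 1)
    -- Positivity
    (hposO : ∀ x : 𝒳, 0 < margX P_O x →
      0 < margTX P_O true x / margX P_O x ∧ margTX P_O true x / margX P_O x < 1)
    -- Randomization: `T ⫫ X` under `P_E`
    (hrand : ∀ (t : Bool) (x : 𝒳), margTX P_E t x = margT P_E t * margX P_E x)
    -- Modularity (cross-multiplied form): `P_E(Y=y | T=t, X=x) = P_O(Y=y | T=t, X=x)`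
    (hmodY : ∀ (y : 𝒴) (t : Bool) (x : 𝒳),
      P_E (y, t, x) * margTX P_O t x = P_O (y, t, x) * margTX P_E t x)
    -- Modularity: `P_E(X=x) = P_O(X=x)`
    (hmodX : ∀ x : 𝒳, margX P_E x = margX P_O x) :
    ∀ (y : 𝒴) (t : Bool) (x : 𝒳),
      P_E (y, t, x) = (P_O (y, t, x) / margTX P_O t x) * margT P_E t * margX P_O x := by
  intro y t x
  rcases (margX_nonneg hO_nonneg x).eq_or_lt with hx | hx
  · rw [eq_zero_of_margX_eq_zero hE_sum.summable hE_nonneg ((hmodX x).trans hx.symm) y t,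
      ← hx, mul_zero]
  · have htx := margTX_pos_of_propensity_mem_Ioo hO_sum.summable hx (hposO x hx) t
    have hmod := hmodY y t x
    rw [hrand, hmodX] at hmod
    field_simp
    linarith

theorem g_formula_with_randomized_assignment
    (P_O P_E : 𝒴 × Bool × 𝒳 → ℝ)
    (hO_nonneg : ∀ z, 0 ≤ P_O z) (hO_sum : HasSum P_O 1)
    (hE_nonneg : ∀ z, 0 ≤ P_E z) (hE_sum : HasSum P_E 1)
    -- Positivity
    (hposE : 0 < margT P_E true ∧ margT P_E true < 1)
    (hposO : ∀ x : 𝒳, 0 < margX P_O x →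
      0 < margTX P_O true x / margX P_O x ∧ margTX P_O true x / margX P_O x < 1)
    -- Randomization: `T ⫫ X` under `P_E`
    (hrand : ∀ (t : Bool) (x : 𝒳), margTX P_E t x = margT P_E t * margX P_E x)
    -- Modularity (cross-multiplied form): `P_E(Y=y | T=t, X=x) = P_O(Y=y | T=t, X=x)`
    (hmodY : ∀ (y : 𝒴) (t : Bool) (x : 𝒳),
      P_E (y, t, x) * margTX P_O t x = P_O (y, t, x) * margTX P_E t x)
    -- Modularity: `P_E(X=x) = P_O(X=x)`
    (hmodX : ∀ x : 𝒳, margX P_E x = margX P_O x) :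
    ∀ (y : 𝒴) (t : Bool) (x : 𝒳),
      P_E (y, t, x) = (P_O (y, t, x) / margTX P_O t x) * margT P_E t * margX P_O x :=
  g_formula_with_randomized_assignment_general P_O P_E hO_nonneg hO_sum hE_nonneg hE_sum hposO hrand
    hmodY hmodX

end
end

section
/- Under the positivity, randomization and modularity assumptions, the experimental mean outcome under treatment is identified by inverse probability weighting of the observational data: E_{P_E}[Y | T=1] = E_{P_O}[ T·Y / π(X) ], where π(x) = P_O(T=1 | X=x) is the propensity score; similarly E_{P_E}[Y | T=0] = E_{P_O}[ (1−T)·Y / (1−π(X)) ]. -/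
/-!
Real-outcome target-trial setup: `(Ω, 𝓕)` carries two probability measures `P_O`
(observational regime) and `P_E` (experimental regime), an integrable real outcome `Y`,
a binary treatment `T : Ω → Bool`, and covariates `X : Ω → 𝒳` with `𝒳` countable.
The propensity score is `π(x) = P_O(T=1 | X=x)`.
STATEMENT 3: Under positivity, randomization and modularity, the experimental mean outcome
under treatment is identified by inverse probability weighting:
`E_{P_E}[Y | T=1] = E_{P_O}[T·Y/π(X)]`, and similarly
`E_{P_E}[Y | T=0] = E_{P_O}[(1−T)·Y/(1−π(X))]`.
-/

open MeasureTheory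
open scoped BigOperators ENNReal

noncomputable section

/-- The propensity score `π(x) = P_O(T=1 | X=x)`, as a ratio of masses. -/
def propScore {Ω : Type*} [MeasurableSpace Ω] {𝒳 : Type*}
    (P_O : Measure Ω) (T : Ω → Bool) (X : Ω → 𝒳) (x : 𝒳) : ℝ :=
  (P_O {ω | T ω = true ∧ X ω = x}).toReal / (P_O {ω | X ω = x}).toReal

/-!
On a stratum `A = E ∩ {X = x}` modularity says that `Y` has the same conditional law under `P_E`
and `P_O`, so `P_O(A) ∫_A Y dP_E = P_E(A) ∫_A Y dP_O`. Randomization and modularity of `X` turn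
`P_E(A)` into `P_E(E) P_O(X = x)`, so the stratum contributes
`∫_A Y / P_O(E | X = x) dP_O` to `E_{P_E}[Y | E]`. Summing over the countably many values of `X`
gives the identity for `E = {T = t}`; for `t = 0` the weight `1 - π(x)` is `P_O(T = 0 | X = x)`.
-/

section

variable {Ω : Type*} [MeasurableSpace Ω]

theorem measure_mul_setIntegral_eq_of_condLaw_eq {μ ν : Measure Ω} {Y : Ω → ℝ} {A : Set Ω}
    (hY : Measurable Y)
    (h : ∀ B : Set ℝ, MeasurableSet B → μ (Y ⁻¹' B ∩ A) * ν A = ν (Y ⁻¹' B ∩ A) * μ A) :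
    (ν A).toReal * ∫ ω in A, Y ω ∂μ = (μ A).toReal * ∫ ω in A, Y ω ∂ν := by
  have hlaw : (ν A • μ.restrict A).map Y = (μ A • ν.restrict A).map Y := by
    ext B hB
    simp only [Measure.map_apply hY hB, Measure.smul_apply, Measure.restrict_apply (hY hB),
      smul_eq_mul]
    rw [mul_comm, h B hB, mul_comm]
  have hmean := congrArg (fun m : Measure ℝ => ∫ y, y ∂m) hlaw
  rwa [integral_map hY.aemeasurable measurable_id'.aestronglyMeasurable,
    integral_map hY.aemeasurable measurable_id'.aestronglyMeasurable, integral_smul_measure,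
    integral_smul_measure, smul_eq_mul, smul_eq_mul] at hmean

theorem setIntegral_eq_tsum_setIntegral_inter_preimage {𝒳 : Type*} [Countable 𝒳]
    [MeasurableSpace 𝒳] [MeasurableSingletonClass 𝒳] {F : Type*} [NormedAddCommGroup F]
    [NormedSpace ℝ F] {μ : Measure Ω} {X : Ω → 𝒳} {f : Ω → F} {s : Set Ω}
    (hX : Measurable X) (hs : MeasurableSet s) (hf : IntegrableOn f s μ) :
    ∫ ω in s, f ω ∂μ = ∑' x, ∫ ω in s ∩ X ⁻¹' {x}, f ω ∂μ := by
  have hs_eq : s = ⋃ x, s ∩ X ⁻¹' {x} := by ext; simp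
  conv_lhs => rw [hs_eq]
  exact integral_iUnion (fun x => hs.inter (hX (measurableSet_singleton x)))
    (fun x y hxy =>
      (pairwise_disjoint_fiber X hxy).mono Set.inter_subset_right Set.inter_subset_right)
    (hs_eq ▸ hf)

theorem integral_ite_eq_setIntegral {μ : Measure Ω} {p : Ω → Prop} [DecidablePred p]
    {f : Ω → ℝ} (hp : MeasurableSet {ω | p ω}) :
    ∫ ω, (if p ω then f ω else 0) ∂μ = ∫ ω in {ω | p ω}, f ω ∂μ := by
  rw [← integral_indicator hp]
  congr with ω
  by_cases h : p ω <;> simp [h]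

theorem integrableOn_of_integrable_ite {μ : Measure Ω} {p : Ω → Prop} [DecidablePred p]
    {f : Ω → ℝ} (hp : MeasurableSet {ω | p ω})
    (hf : Integrable (fun ω => if p ω then f ω else 0) μ) :
    IntegrableOn f {ω | p ω} μ := by
  rw [← integrable_indicator_iff hp]
  refine hf.congr (Filter.Eventually.of_forall fun ω => ?_)
  by_cases h : p ω <;> simp [h]

theorem setIntegral_div_measure_eq_setIntegral_div_of_condLaw_eq {P_O P_E : Measure Ω}
    [IsFiniteMeasure P_O] [IsFiniteMeasure P_E] {Y : Ω → ℝ} {E S : Set Ω} {w : ℝ}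
    (hY : Measurable Y) (hE : P_E E ≠ 0) (hw : w * (P_O S).toReal = (P_O (E ∩ S)).toReal)
    (hpos : 0 < P_O S → 0 < P_O (E ∩ S)) (hrand : P_E (E ∩ S) = P_E E * P_E S)
    (hmodY : ∀ B : Set ℝ, MeasurableSet B →
      P_E (Y ⁻¹' B ∩ (E ∩ S)) * P_O (E ∩ S) = P_O (Y ⁻¹' B ∩ (E ∩ S)) * P_E (E ∩ S))
    (hmodS : P_E S = P_O S) :
    (∫ ω in E ∩ S, Y ω ∂P_E) / (P_E E).toReal = ∫ ω in E ∩ S, Y ω / w ∂P_O := by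
  rcases eq_or_ne (P_O S) 0 with hS | hS
  · have hO : P_O (E ∩ S) = 0 := measure_mono_null Set.inter_subset_right hS
    have hE : P_E (E ∩ S) = 0 := measure_mono_null Set.inter_subset_right (hmodS.trans hS)
    simp [Measure.restrict_eq_zero.mpr hO, Measure.restrict_eq_zero.mpr hE]
  · have hcross := measure_mul_setIntegral_eq_of_condLaw_eq hY hmodY
    rw [hrand, hmodS, ENNReal.toReal_mul] at hcross
    have hc : (P_E E).toReal ≠ 0 := (ENNReal.toReal_pos hE (measure_ne_top _ _)).ne'
    have hs : (P_O S).toReal ≠ 0 := (ENNReal.toReal_pos hS (measure_ne_top _ _)).ne'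
    have hw0 : w ≠ 0 := by
      rintro rfl
      rw [zero_mul, eq_comm, ENNReal.toReal_eq_zero_iff] at hw
      exact hw.elim (hpos (pos_iff_ne_zero.2 hS)).ne' (measure_ne_top _ _)
    rw [integral_div, div_eq_div_iff hc hw0]
    apply mul_right_cancel₀ hs
    linear_combination (∫ ω in E ∩ S, Y ω ∂P_E) * hw + hcross

theorem setIntegral_div_measure_eq_setIntegral_div_propensity {𝒳 : Type*} [Countable 𝒳]
    [MeasurableSpace 𝒳] [MeasurableSingletonClass 𝒳] {P_O P_E : Measure Ω}
    [IsFiniteMeasure P_O] [IsFiniteMeasure P_E] {Y : Ω → ℝ} {X : Ω → 𝒳} {E : Set Ω}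
    {d : 𝒳 → ℝ} (hY : Measurable Y) (hX : Measurable X) (hEm : MeasurableSet E)
    (hE : P_E E ≠ 0)
    (hd : ∀ x, d x * (P_O (X ⁻¹' {x})).toReal = (P_O (E ∩ X ⁻¹' {x})).toReal)
    (hpos : ∀ x, 0 < P_O (X ⁻¹' {x}) → 0 < P_O (E ∩ X ⁻¹' {x}))
    (hrand : ∀ x, P_E (E ∩ X ⁻¹' {x}) = P_E E * P_E (X ⁻¹' {x}))
    (hmodY : ∀ B : Set ℝ, MeasurableSet B → ∀ x,
      P_E (Y ⁻¹' B ∩ (E ∩ X ⁻¹' {x})) * P_O (E ∩ X ⁻¹' {x})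
        = P_O (Y ⁻¹' B ∩ (E ∩ X ⁻¹' {x})) * P_E (E ∩ X ⁻¹' {x}))
    (hmodX : ∀ x, P_E (X ⁻¹' {x}) = P_O (X ⁻¹' {x}))
    (hYint : IntegrableOn Y E P_E) (hint : IntegrableOn (fun ω => Y ω / d (X ω)) E P_O) :
    (∫ ω in E, Y ω ∂P_E) / (P_E E).toReal = ∫ ω in E, Y ω / d (X ω) ∂P_O := by
  rw [setIntegral_eq_tsum_setIntegral_inter_preimage hX hEm hYint,
    setIntegral_eq_tsum_setIntegral_inter_preimage hX hEm hint, ← tsum_div_const]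
  refine tsum_congr fun x => ?_
  have hweight : ∫ ω in E ∩ X ⁻¹' {x}, Y ω / d (X ω) ∂P_O
      = ∫ ω in E ∩ X ⁻¹' {x}, Y ω / d x ∂P_O :=
    setIntegral_congr_fun (hEm.inter (hX (measurableSet_singleton x)))
      (fun ω hω => by rw [Set.mem_singleton_iff.mp hω.2])
  rw [hweight]
  exact setIntegral_div_measure_eq_setIntegral_div_of_condLaw_eq hY hE (hd x) (hpos x)
    (hrand x) (fun B hB => hmodY B hB x) (hmodX x)

end

section

variable {Ω : Type*} [MeasurableSpace Ω] {𝒳 : Type*} {P : Measure Ω} {T : Ω → Bool}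
  {X : Ω → 𝒳}

theorem measure_true_and_add_measure_false_and (hT : Measurable T) (p : Ω → Prop) :
    P {ω | T ω = true ∧ p ω} + P {ω | T ω = false ∧ p ω} = P {ω | p ω} := by
  convert measure_inter_add_sdiff {ω | p ω} (hT (measurableSet_singleton true)) using 3 <;>
    ext ω <;> simp [and_comm]

theorem propScore_mul_measure [IsFiniteMeasure P] (x : 𝒳) :
    propScore P T X x * (P {ω | X ω = x}).toReal = (P {ω | T ω = true ∧ X ω = x}).toReal := by
  rcases eq_or_ne (P {ω | X ω = x}) 0 with h | h
  · rw [h, measure_mono_null (fun ω hω => hω.2) h]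
    simp
  · exact div_mul_cancel₀ _ (ENNReal.toReal_pos h (measure_ne_top _ _)).ne'

theorem one_sub_propScore_mul_measure [IsFiniteMeasure P] (hT : Measurable T) (x : 𝒳) :
    (1 - propScore P T X x) * (P {ω | X ω = x}).toReal
      = (P {ω | T ω = false ∧ X ω = x}).toReal := by
  rw [sub_mul, one_mul, propScore_mul_measure, ← measure_true_and_add_measure_false_and hT,
    ENNReal.toReal_add (measure_ne_top _ _) (measure_ne_top _ _), add_sub_cancel_left]

end

theorem ipw_identification_general
    {Ω : Type*} [MeasurableSpace Ω]
    {𝒳 : Type*} [Countable 𝒳] [MeasurableSpace 𝒳] [MeasurableSingletonClass 𝒳]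
    (P_O P_E : Measure Ω) [IsProbabilityMeasure P_O] [IsProbabilityMeasure P_E]
    (Y : Ω → ℝ) (T : Ω → Bool) (X : Ω → 𝒳)
    (hY : Measurable Y) (hT : Measurable T) (hX : Measurable X)
    (hYintE : Integrable Y P_E)
    -- `T·Y/π(X)` and `(1−T)·Y/(1−π(X))` are integrable under `P_O`
    (hint1 : Integrable
      (fun ω => if T ω = true then Y ω / propScore P_O T X (X ω) else 0) P_O)
    (hint0 : Integrable
      (fun ω => if T ω = false then Y ω / (1 - propScore P_O T X (X ω)) else 0) P_O)
    -- Positivity: `0 < P_E(T=1) < 1`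
    (hposE : 0 < P_E {ω | T ω = true} ∧ P_E {ω | T ω = true} < 1)
    -- Positivity: `0 < P_O(T=1 | X=x) < 1` whenever `P_O(X=x) > 0`
    (hposO : ∀ x : 𝒳, 0 < P_O {ω | X ω = x} →
      0 < P_O {ω | T ω = true ∧ X ω = x} ∧
        P_O {ω | T ω = true ∧ X ω = x} < P_O {ω | X ω = x})
    -- Randomization: `T ⫫ X` under `P_E`
    (hrand : ∀ (t : Bool) (x : 𝒳),
      P_E {ω | T ω = t ∧ X ω = x} = P_E {ω | T ω = t} * P_E {ω | X ω = x})
    -- Modularity (cross-multiplied form):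
    -- `P_E(Y ∈ B | T=t, X=x) = P_O(Y ∈ B | T=t, X=x)` for all Borel `B`
    (hmodY : ∀ B : Set ℝ, MeasurableSet B → ∀ (t : Bool) (x : 𝒳),
      P_E {ω | Y ω ∈ B ∧ T ω = t ∧ X ω = x} * P_O {ω | T ω = t ∧ X ω = x}
        = P_O {ω | Y ω ∈ B ∧ T ω = t ∧ X ω = x} * P_E {ω | T ω = t ∧ X ω = x})
    -- Modularity: `P_E(X=x) = P_O(X=x)`
    (hmodX : ∀ x : 𝒳, P_E {ω | X ω = x} = P_O {ω | X ω = x}) :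
    (∫ ω in {ω | T ω = true}, Y ω ∂P_E) / (P_E {ω | T ω = true}).toReal
      = ∫ ω, (if T ω = true then Y ω / propScore P_O T X (X ω) else 0) ∂P_O
    ∧ (∫ ω in {ω | T ω = false}, Y ω ∂P_E) / (P_E {ω | T ω = false}).toReal
      = ∫ ω, (if T ω = false then Y ω / (1 - propScore P_O T X (X ω)) else 0) ∂P_O := by
  have hmeas (t : Bool) : MeasurableSet {ω | T ω = t} := hT (measurableSet_singleton t)
  have hposE_false : P_E {ω | T ω = false} ≠ 0 := by
    have hc : {ω | T ω = false} = {ω | T ω = true}ᶜ := by ext; simp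
    rw [hc, prob_compl_eq_one_sub (hmeas true)]
    exact (tsub_pos_of_lt hposE.2).ne'
  have hposO_false (x : 𝒳) (hx : 0 < P_O {ω | X ω = x}) : 0 < P_O {ω | T ω = false ∧ X ω = x} := by
    refine pos_of_lt_add_right (a := P_O {ω | T ω = true ∧ X ω = x}) ?_
    rw [measure_true_and_add_measure_false_and hT]
    exact (hposO x hx).2
  rw [integral_ite_eq_setIntegral (hmeas true), integral_ite_eq_setIntegral (hmeas false)]
  exact ⟨setIntegral_div_measure_eq_setIntegral_div_propensity (d := propScore P_O T X) hY hX
      (hmeas true) hposE.1.ne' propScore_mul_measure (fun x hx => (hposO x hx).1) (hrand true)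
      (fun B hB => hmodY B hB true) hmodX hYintE.integrableOn
      (integrableOn_of_integrable_ite (hmeas true) hint1),
    setIntegral_div_measure_eq_setIntegral_div_propensity (d := (1 - propScore P_O T X ·)) hY hX
      (hmeas false) hposE_false (one_sub_propScore_mul_measure hT) hposO_false (hrand false)
      (fun B hB => hmodY B hB false) hmodX hYintE.integrableOn
      (integrableOn_of_integrable_ite (hmeas false) hint0)⟩

theorem ipw_identification
    {Ω : Type*} [MeasurableSpace Ω]
    {𝒳 : Type*} [Countable 𝒳] [MeasurableSpace 𝒳] [MeasurableSingletonClass 𝒳]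
    (P_O P_E : Measure Ω) [IsProbabilityMeasure P_O] [IsProbabilityMeasure P_E]
    (Y : Ω → ℝ) (T : Ω → Bool) (X : Ω → 𝒳)
    (hY : Measurable Y) (hT : Measurable T) (hX : Measurable X)
    (hYintO : Integrable Y P_O) (hYintE : Integrable Y P_E)
    -- `T·Y/π(X)` and `(1−T)·Y/(1−π(X))` are integrable under `P_O`
    (hint1 : Integrable
      (fun ω => if T ω = true then Y ω / propScore P_O T X (X ω) else 0) P_O)
    (hint0 : Integrable
      (fun ω => if T ω = false then Y ω / (1 - propScore P_O T X (X ω)) else 0) P_O)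
    -- Positivity: `0 < P_E(T=1) < 1`
    (hposE : 0 < P_E {ω | T ω = true} ∧ P_E {ω | T ω = true} < 1)
    -- Positivity: `0 < P_O(T=1 | X=x) < 1` whenever `P_O(X=x) > 0`
    (hposO : ∀ x : 𝒳, 0 < P_O {ω | X ω = x} →
      0 < P_O {ω | T ω = true ∧ X ω = x} ∧
        P_O {ω | T ω = true ∧ X ω = x} < P_O {ω | X ω = x})
    -- Randomization: `T ⫫ X` under `P_E`
    (hrand : ∀ (t : Bool) (x : 𝒳),
      P_E {ω | T ω = t ∧ X ω = x} = P_E {ω | T ω = t} * P_E {ω | X ω = x})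
    -- Modularity (cross-multiplied form):
    -- `P_E(Y ∈ B | T=t, X=x) = P_O(Y ∈ B | T=t, X=x)` for all Borel `B`
    (hmodY : ∀ B : Set ℝ, MeasurableSet B → ∀ (t : Bool) (x : 𝒳),
      P_E {ω | Y ω ∈ B ∧ T ω = t ∧ X ω = x} * P_O {ω | T ω = t ∧ X ω = x}
        = P_O {ω | Y ω ∈ B ∧ T ω = t ∧ X ω = x} * P_E {ω | T ω = t ∧ X ω = x})
    -- Modularity: `P_E(X=x) = P_O(X=x)`
    (hmodX : ∀ x : 𝒳, P_E {ω | X ω = x} = P_O {ω | X ω = x}) :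
    (∫ ω in {ω | T ω = true}, Y ω ∂P_E) / (P_E {ω | T ω = true}).toReal
      = ∫ ω, (if T ω = true then Y ω / propScore P_O T X (X ω) else 0) ∂P_O
    ∧ (∫ ω in {ω | T ω = false}, Y ω ∂P_E) / (P_E {ω | T ω = false}).toReal
      = ∫ ω, (if T ω = false then Y ω / (1 - propScore P_O T X (X ω)) else 0) ∂P_O :=
  ipw_identification_general P_O P_E Y T X hY hT hX hYintE hint1 hint0 hposE hposO hrand hmodY hmodX

end
end

section
/- Under the extended positivity, extended randomization, conditional ignorability and extended modularity assumptions, the experimental law of (Y, T, T^O, X) factorizes according to the extended g-formula with randomized assignment: for all y, t, t', x, P_E(Y=y, T=t, T^O=t', X=x) = P_O(Y=y | T=t, X=x) · P_E(T=t) · P_O(T^O=t' | X=x) · P_O(X=x), where any factor whose conditioning event has P_O-mass zero makes both sides zero. -/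
/-!
Extended discrete target-trial setup: `P_O` and `P_E` are probability mass functions on
`𝒴 × Bool × Bool × 𝒳` with coordinates `(Y, T, T^O, X)` (outcome, administered treatment,
natural treatment assignment, covariate); under `P_O` the event `{T = T^O}` has probability 1.
STATEMENT 5: Under extended positivity, extended randomization, conditional ignorability and
extended modularity, the experimental law factorizes according to the extended g-formula with
randomized assignment:
`P_E(Y=y, T=t, T^O=t', X=x)
  = P_O(Y=y | T=t, X=x) · P_E(T=t) · P_O(T^O=t' | X=x) · P_O(X=x)`.
(Conditional probabilities are ratios of masses; with the `0/0 = 0` division convention, any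
factor whose conditioning event has `P_O`-mass zero makes both sides zero.)
-/

open scoped BigOperators

noncomputable section

variable {𝒴 𝒳 : Type*} [Countable 𝒴] [Countable 𝒳]

/-- Marginal mass of `X = x` (coordinates are `(Y, T, T^O, X)`). -/
def mX (P : 𝒴 × Bool × Bool × 𝒳 → ℝ) (x : 𝒳) : ℝ :=
  ∑' y : 𝒴, ∑' t : Bool, ∑' t' : Bool, P (y, t, t', x)

/-- Marginal mass of `T = t`. -/
def mT (P : 𝒴 × Bool × Bool × 𝒳 → ℝ) (t : Bool) : ℝ :=
  ∑' y : 𝒴, ∑' t' : Bool, ∑' x : 𝒳, P (y, t, t', x)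

/-- Marginal mass of `T^O = t'`. -/
def mTo (P : 𝒴 × Bool × Bool × 𝒳 → ℝ) (t' : Bool) : ℝ :=
  ∑' y : 𝒴, ∑' t : Bool, ∑' x : 𝒳, P (y, t, t', x)

/-- Joint mass of `T = t, X = x`. -/
def mTX (P : 𝒴 × Bool × Bool × 𝒳 → ℝ) (t : Bool) (x : 𝒳) : ℝ :=
  ∑' y : 𝒴, ∑' t' : Bool, P (y, t, t', x)

/-- Joint mass of `T^O = t', X = x`. -/
def mToX (P : 𝒴 × Bool × Bool × 𝒳 → ℝ) (t' : Bool) (x : 𝒳) : ℝ :=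
  ∑' y : 𝒴, ∑' t : Bool, P (y, t, t', x)

/-- Joint mass of `Y = y, T = t, X = x`. -/
def mYTX (P : 𝒴 × Bool × Bool × 𝒳 → ℝ) (y : 𝒴) (t : Bool) (x : 𝒳) : ℝ :=
  ∑' t' : Bool, P (y, t, t', x)

/-- Joint mass of `T = t, T^O = t', X = x`. -/
def mTToX (P : 𝒴 × Bool × Bool × 𝒳 → ℝ) (t t' : Bool) (x : 𝒳) : ℝ :=
  ∑' y : 𝒴, P (y, t, t', x)

/-- Joint mass of `T = t, T^O = t'`. -/
def mTTo (P : 𝒴 × Bool × Bool × 𝒳 → ℝ) (t t' : Bool) : ℝ :=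
  ∑' y : 𝒴, ∑' x : 𝒳, P (y, t, t', x)

/-- Joint mass of `Y = y, T = t, T^O = t'`. -/
def mYTTo (P : 𝒴 × Bool × Bool × 𝒳 → ℝ) (y : 𝒴) (t t' : Bool) : ℝ :=
  ∑' x : 𝒳, P (y, t, t', x)

/-!
Randomization makes `T` independent of `(T^O, X)` under `P_E`, so `P_E(T=t, X=x) = P_E(T=t) P_E(X=x)`,
and conditional ignorability then yields the experimental factorization
`P_E(y, t, t', x) P_E(X=x) = P_E(Y=y, T=t, X=x) P_E(T^O=t', X=x)` as soon as `P_E(T=t) ≠ 0`.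
Modularity transports the three factors to `P_O`. Dividing by `P_O(T=t, X=x)` is legitimate because
`T = T^O` almost surely under `P_O`, so it equals `P_O(T^O=t, X=x)`, which positivity makes nonzero.
If `P_O(X=x) = 0` or `P_E(T=t) = 0`, both sides vanish: a point mass is bounded by these marginals.
-/

theorem tsum_tsum_eq_sum_tsum {ι κ M : Type*} [Fintype κ] [AddCommMonoid M]
    [TopologicalSpace M] [ContinuousAdd M] [T2Space M] {f : ι → κ → M}
    (hf : ∀ k, Summable fun i => f i k) :
    ∑' i, ∑' k, f i k = ∑ k, ∑' i, f i k := by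
  simp_rw [tsum_fintype]
  exact Summable.tsum_finsetSum fun k _ => hf k

section Marginals

variable {α β : Type*} {P : α × Bool × Bool × β → ℝ}

theorem summable_apply_outcome (hP : Summable P) (t t' : Bool) (x : β) :
    Summable fun y => P (y, t, t', x) :=
  hP.comp_injective fun _ _ h => by simpa using h

theorem mTX_eq_sum_mTToX (hP : Summable P) (t : Bool) (x : β) :
    mTX P t x = ∑ t', mTToX P t t' x :=
  tsum_tsum_eq_sum_tsum fun t' => summable_apply_outcome hP t t' x

theorem mToX_eq_sum_mTToX (hP : Summable P) (t' : Bool) (x : β) :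
    mToX P t' x = ∑ t, mTToX P t t' x :=
  tsum_tsum_eq_sum_tsum fun t => summable_apply_outcome hP t t' x

theorem mX_eq_sum_mTX (hP : Summable P) (x : β) : mX P x = ∑ t, mTX P t x := by
  refine tsum_tsum_eq_sum_tsum fun t => ?_
  simp_rw [tsum_fintype]
  exact summable_sum fun t' _ => summable_apply_outcome hP t t' x

theorem mX_eq_sum_mToX (hP : Summable P) (x : β) : mX P x = ∑ t', mToX P t' x := by
  simp_rw [mX_eq_sum_mTX hP, mTX_eq_sum_mTToX hP, mToX_eq_sum_mTToX hP]
  exact Finset.sum_comm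

theorem mX_nonneg (h0 : ∀ z, 0 ≤ P z) (x : β) : 0 ≤ mX P x :=
  tsum_nonneg fun _ => tsum_nonneg fun _ => tsum_nonneg fun _ => h0 _

theorem mTX_nonneg (h0 : ∀ z, 0 ≤ P z) (t : Bool) (x : β) : 0 ≤ mTX P t x :=
  tsum_nonneg fun _ => tsum_nonneg fun _ => h0 _

theorem mTToX_nonneg (h0 : ∀ z, 0 ≤ P z) (t t' : Bool) (x : β) : 0 ≤ mTToX P t t' x :=
  tsum_nonneg fun _ => h0 _

theorem apply_le_mTToX (hP : Summable P) (h0 : ∀ z, 0 ≤ P z) (y : α) (t t' : Bool) (x : β) :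
    P (y, t, t', x) ≤ mTToX P t t' x :=
  (summable_apply_outcome hP t t' x).le_tsum y fun _ _ => h0 _

theorem mTToX_le_mX (hP : Summable P) (h0 : ∀ z, 0 ≤ P z) (t t' : Bool) (x : β) :
    mTToX P t t' x ≤ mX P x :=
  calc mTToX P t t' x ≤ mTX P t x := by
        rw [mTX_eq_sum_mTToX hP]
        exact Finset.single_le_sum (fun s' _ => mTToX_nonneg h0 t s' x) (Finset.mem_univ t')
    _ ≤ mX P x := by
        rw [mX_eq_sum_mTX hP]
        exact Finset.single_le_sum (fun s _ => mTX_nonneg h0 s x) (Finset.mem_univ t)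

theorem mTX_eq_mToX_of_diagonal (hP : Summable P)
    (hdiag : ∀ (y : α) (t t' : Bool) (x : β), t ≠ t' → P (y, t, t', x) = 0) (t : Bool) (x : β) :
    mTX P t x = mToX P t x := by
  have hoff (s s' : Bool) (h : s ≠ s') : mTToX P s s' x = 0 :=
    (tsum_congr fun y => hdiag y s s' x h).trans tsum_zero
  rw [mTX_eq_sum_mTToX hP, mToX_eq_sum_mTToX hP,
    Finset.sum_eq_single t (fun s' _ h => hoff t s' (Ne.symm h)) (by simp),
    Finset.sum_eq_single t (fun s _ h => hoff s t h) (by simp)]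

theorem mToX_pos_of_ratio_mem_Ioo (hP : Summable P) {x : β} (hx : 0 < mX P x)
    (h : 0 < mToX P true x / mX P x ∧ mToX P true x / mX P x < 1) (t' : Bool) :
    0 < mToX P t' x := by
  have htrue : 0 < mToX P true x := (div_pos_iff_of_pos_right hx).mp h.1
  have hlt : mToX P true x < mX P x := (div_lt_one hx).mp h.2
  have hsplit : mX P x = mToX P true x + mToX P false x := by
    rw [mX_eq_sum_mToX hP, Fintype.sum_bool]
  cases t' <;> linarith

theorem mTX_eq_mT_mul_mX (hP : Summable P)
    (hrand : ∀ (t t' : Bool) (x : β), mTToX P t t' x = mT P t * mToX P t' x)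
    (t : Bool) (x : β) : mTX P t x = mT P t * mX P x := by
  simp_rw [mTX_eq_sum_mTToX hP, hrand, ← Finset.mul_sum, ← mX_eq_sum_mToX hP]

theorem apply_mul_mX_eq_mYTX_mul_mToX (hP : Summable P)
    (hrand : ∀ (t t' : Bool) (x : β), mTToX P t t' x = mT P t * mToX P t' x)
    (hign : ∀ (y : α) (t t' : Bool) (x : β),
      P (y, t, t', x) * mTX P t x = mYTX P y t x * mTToX P t t' x)
    {t : Bool} (ht : mT P t ≠ 0) (y : α) (t' : Bool) (x : β) :
    P (y, t, t', x) * mX P x = mYTX P y t x * mToX P t' x := by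
  have h := hign y t t' x
  rw [mTX_eq_mT_mul_mX hP hrand, hrand] at h
  exact mul_left_cancel₀ ht (by linear_combination h)

end Marginals

theorem extended_g_formula_with_randomized_assignment_general
    (P_O P_E : 𝒴 × Bool × Bool × 𝒳 → ℝ)
    (hO_nonneg : ∀ z, 0 ≤ P_O z) (hO_sum : HasSum P_O 1)
    (hE_nonneg : ∀ z, 0 ≤ P_E z) (hE_sum : HasSum P_E 1)
    -- under `P_O`, `T = T^O` with probability one
    (hTTo : ∀ (y : 𝒴) (t t' : Bool) (x : 𝒳), t ≠ t' → P_O (y, t, t', x) = 0)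
    -- Positivity
    (hposO : ∀ x : 𝒳, 0 < mX P_O x →
      0 < mToX P_O true x / mX P_O x ∧ mToX P_O true x / mX P_O x < 1)
    -- Extended randomization: `T ⫫ (T^O, X)` under `P_E`
    (hrand : ∀ (t t' : Bool) (x : 𝒳), mTToX P_E t t' x = mT P_E t * mToX P_E t' x)
    -- Conditional ignorability: `Y ⫫ T^O ∣ (T, X)` under `P_E` (cross-multiplied form)
    (hign : ∀ (y : 𝒴) (t t' : Bool) (x : 𝒳),
      P_E (y, t, t', x) * mTX P_E t x = mYTX P_E y t x * mTToX P_E t t' x)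
    -- Extended modularity (cross-multiplied forms)
    (hmodY : ∀ (y : 𝒴) (t : Bool) (x : 𝒳),
      mYTX P_E y t x * mTX P_O t x = mYTX P_O y t x * mTX P_E t x)
    (hmodTo : ∀ (t' : Bool) (x : 𝒳),
      mToX P_E t' x * mX P_O x = mToX P_O t' x * mX P_E x)
    (hmodX : ∀ x : 𝒳, mX P_E x = mX P_O x) :
    ∀ (y : 𝒴) (t t' : Bool) (x : 𝒳),
      P_E (y, t, t', x)
        = (mYTX P_O y t x / mTX P_O t x) * mT P_E t
            * (mToX P_O t' x / mX P_O x) * mX P_O x := by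
  intro y t t' x
  have hOs := hO_sum.summable
  have hEs := hE_sum.summable
  by_cases hX : mX P_O x = 0
  · have hE : P_E (y, t, t', x) = 0 := le_antisymm
      ((apply_le_mTToX hEs hE_nonneg y t t' x).trans <|
        (mTToX_le_mX hEs hE_nonneg t t' x).trans_eq <| (hmodX x).trans hX) (hE_nonneg _)
    simp [hX, hE]
  by_cases hT : mT P_E t = 0
  · have hE : P_E (y, t, t', x) = 0 := le_antisymm
      ((apply_le_mTToX hEs hE_nonneg y t t' x).trans_eq <| by rw [hrand, hT, zero_mul])
      (hE_nonneg _)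
    simp [hT, hE]
  have hTX : mTX P_O t x ≠ 0 := by
    rw [mTX_eq_mToX_of_diagonal hOs hTTo]
    have hXpos := (mX_nonneg hO_nonneg x).lt_of_ne' hX
    exact (mToX_pos_of_ratio_mem_Ioo hOs hXpos (hposO x hXpos) t).ne'
  have hToX : mToX P_E t' x = mToX P_O t' x := mul_right_cancel₀ hX (by rw [hmodTo, hmodX])
  have hgE := apply_mul_mX_eq_mYTX_mul_mToX hEs hrand hign hT y t' x
  have hY := hmodY y t x
  rw [hmodX, hToX] at hgE
  rw [mTX_eq_mT_mul_mX hEs hrand, hmodX] at hY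
  rw [mul_assoc _ (_ / _), div_mul_cancel₀ _ hX, div_mul_eq_mul_div, div_mul_eq_mul_div,
    eq_div_iff hTX]
  refine mul_right_cancel₀ hX ?_
  linear_combination mTX P_O t x * hgE + mToX P_O t' x * hY

theorem extended_g_formula_with_randomized_assignment
    (P_O P_E : 𝒴 × Bool × Bool × 𝒳 → ℝ)
    (hO_nonneg : ∀ z, 0 ≤ P_O z) (hO_sum : HasSum P_O 1)
    (hE_nonneg : ∀ z, 0 ≤ P_E z) (hE_sum : HasSum P_E 1)
    -- under `P_O`, `T = T^O` with probability one
    (hTTo : ∀ (y : 𝒴) (t t' : Bool) (x : 𝒳), t ≠ t' → P_O (y, t, t', x) = 0)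
    -- Positivity
    (hposE : 0 < mT P_E true ∧ mT P_E true < 1)
    (hposO : ∀ x : 𝒳, 0 < mX P_O x →
      0 < mToX P_O true x / mX P_O x ∧ mToX P_O true x / mX P_O x < 1)
    -- Extended randomization: `T ⫫ (T^O, X)` under `P_E`
    (hrand : ∀ (t t' : Bool) (x : 𝒳), mTToX P_E t t' x = mT P_E t * mToX P_E t' x)
    -- Conditional ignorability: `Y ⫫ T^O ∣ (T, X)` under `P_E` (cross-multiplied form)
    (hign : ∀ (y : 𝒴) (t t' : Bool) (x : 𝒳),
      P_E (y, t, t', x) * mTX P_E t x = mYTX P_E y t x * mTToX P_E t t' x)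
    -- Extended modularity (cross-multiplied forms)
    (hmodY : ∀ (y : 𝒴) (t : Bool) (x : 𝒳),
      mYTX P_E y t x * mTX P_O t x = mYTX P_O y t x * mTX P_E t x)
    (hmodTo : ∀ (t' : Bool) (x : 𝒳),
      mToX P_E t' x * mX P_O x = mToX P_O t' x * mX P_E x)
    (hmodX : ∀ x : 𝒳, mX P_E x = mX P_O x) :
    ∀ (y : 𝒴) (t t' : Bool) (x : 𝒳),
      P_E (y, t, t', x)
        = (mYTX P_O y t x / mTX P_O t x) * mT P_E t
            * (mToX P_O t' x / mX P_O x) * mX P_O x :=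
  extended_g_formula_with_randomized_assignment_general P_O P_E hO_nonneg hO_sum hE_nonneg hE_sum
    hTTo hposO hrand hign hmodY hmodTo hmodX

end
end

section
/- Under the extended positivity, extended randomization, conditional ignorability and extended modularity assumptions (with modularity of the conditional law of a real-valued outcome Y given (T,X)), the average treatment effect on the treated is identified as: E_{P_E}[Y | T=1, T^O=1] − E_{P_E}[Y | T=0, T^O=1] = Σ_x ( E_{P_O}[Y | T=1, X=x] − E_{P_O}[Y | T=0, X=x] ) · P_O(X=x | T^O=1), the sum ranging over x with P_O(X=x, T^O=1) > 0. -/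
/-!
Fix a treatment arm `t`. Randomization together with the modularity of `(T^O, X)` gives
`P_E(T=t, X=x, T^O=1) = P_E(T=t) · P_O(T^O=1, X=x)`. Ignorability says that under `P_E` the law
of `Y` on the cell `{T=t, X=x, T^O=1}` is its law on `{T=t, X=x}`, and outcome modularity
transports the latter to `P_O`; the `P_O`-cell is not null because `T = T^O` a.s. under `P_O`
and `T^O` is non-degenerate given `X`. So `E_E[Y | T=t, X=x, T^O=1] = E_O[Y | T=t, X=x]`, and the
tower rule over the discrete `X` yields
`E_E[Y | T=t, T^O=1] = ∑ₓ E_O[Y | T=t, X=x] · P_O(X=x | T^O=1)`. Subtract the two arms.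
-/

open MeasureTheory
open scoped ENNReal

noncomputable section

namespace TargetTrial

theorem iUnion_inter_preimage_singleton {Ω 𝒳 : Type*} (X : Ω → 𝒳) (s : Set Ω) :
    ⋃ x, s ∩ X ⁻¹' {x} = s := by
  rw [← Set.inter_iUnion, ← Set.preimage_iUnion, Set.iUnion_of_singleton, Set.preimage_univ,
    Set.inter_univ]

theorem pairwise_disjoint_inter_preimage_singleton {Ω 𝒳 : Type*} (X : Ω → 𝒳) (s : Set Ω) :
    Pairwise (Function.onFun Disjoint fun x => s ∩ X ⁻¹' {x}) :=
  fun _ _ hxy =>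
    (pairwise_disjoint_fiber X hxy).mono Set.inter_subset_right Set.inter_subset_right

section General

variable {Ω : Type*} [MeasurableSpace Ω] {μ ν : Measure Ω} {Y : Ω → ℝ}

/-- `E_μ[Y | s]`, which is `0` when `μ s = 0`. -/
def condMean (μ : Measure Ω) (Y : Ω → ℝ) (s : Set Ω) : ℝ :=
  (∫ ω in s, Y ω ∂μ) / (μ s).toReal

theorem measure_eq_of_mul_eq_of_subset [IsFiniteMeasure ν] {s u : Set Ω} (hsu : s ⊆ u)
    (hu : μ u = ν u) (h : μ s * ν u = ν s * μ u) : μ s = ν s := by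
  rcases eq_or_ne (ν u) 0 with hν | hν
  · rw [measure_mono_null hsu (hu.trans hν), measure_mono_null hsu hν]
  · rwa [hu, ENNReal.mul_left_inj hν (measure_ne_top ν u)] at h

/-- Proportional laws of `Y` on `s` under `μ` and on `s'` under `ν` have proportional means. -/
theorem setIntegral_mul_eq_of_measure_preimage_inter_mul (hY : Measurable Y) {s s' : Set Ω}
    {c c' : ℝ≥0∞} (h : ∀ B, MeasurableSet B → μ (Y ⁻¹' B ∩ s) * c = ν (Y ⁻¹' B ∩ s') * c') :
    (∫ ω in s, Y ω ∂μ) * c.toReal = (∫ ω in s', Y ω ∂ν) * c'.toReal := by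
  have hmap : c • (μ.restrict s).map Y = c' • (ν.restrict s').map Y := by
    ext B hB
    simp only [Measure.smul_apply, smul_eq_mul, Measure.map_apply hY hB,
      Measure.restrict_apply (hY hB)]
    rw [mul_comm, h B hB, mul_comm]
  have hint : ∀ (ρ : Measure Ω) (c : ℝ≥0∞),
      ∫ y, y ∂(c • ρ.map Y) = (∫ ω, Y ω ∂ρ) * c.toReal := by
    intro ρ c
    have hmean : ∫ y, y ∂(ρ.map Y) = ∫ ω, Y ω ∂ρ :=
      integral_map hY.aemeasurable measurable_id.aestronglyMeasurable
    rw [integral_smul_measure, hmean, smul_eq_mul, mul_comm]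
  rw [← hint, ← hint, hmap]

theorem measure_preimage_inter_mul_union_eq (hY : Measurable Y) {B : Set ℝ}
    (hB : MeasurableSet B) {s₁ s₀ : Set Ω} (hd : Disjoint s₁ s₀) (hs₀ : MeasurableSet s₀)
    (h : μ (Y ⁻¹' B ∩ s₁) * μ s₀ = μ (Y ⁻¹' B ∩ s₀) * μ s₁) :
    μ (Y ⁻¹' B ∩ s₁) * μ (s₁ ∪ s₀) = μ (Y ⁻¹' B ∩ (s₁ ∪ s₀)) * μ s₁ := by
  have hdB : Disjoint (Y ⁻¹' B ∩ s₁) (Y ⁻¹' B ∩ s₀) :=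
    hd.mono Set.inter_subset_right Set.inter_subset_right
  rw [Set.inter_union_distrib_left, measure_union hd hs₀, measure_union hdB ((hY hB).inter hs₀),
    mul_add, h, add_mul]

/-- Chaining "the law of `Y` on `s₁` is its law on `s`" (under `μ`) with "the law of `Y` on `s`
is the same under `μ` and `ν`". -/
theorem setIntegral_eq_toReal_mul_condMean [IsFiniteMeasure μ] [IsFiniteMeasure ν]
    (hY : Measurable Y) {s₁ s : Set Ω} (hs₁ : s₁ ⊆ s) (hν : μ s ≠ 0 → ν s ≠ 0)
    (hμ : ∀ B, MeasurableSet B → μ (Y ⁻¹' B ∩ s₁) * μ s = μ (Y ⁻¹' B ∩ s) * μ s₁)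
    (hμν : ∀ B, MeasurableSet B → μ (Y ⁻¹' B ∩ s) * ν s = ν (Y ⁻¹' B ∩ s) * μ s) :
    ∫ ω in s₁, Y ω ∂μ = (μ s₁).toReal * condMean ν Y s := by
  rcases eq_or_ne (μ s) 0 with hs | hs
  · rw [setIntegral_measure_zero _ (measure_mono_null hs₁ hs), measure_mono_null hs₁ hs]
    simp
  have hlaw : ∀ B, MeasurableSet B → μ (Y ⁻¹' B ∩ s₁) * ν s = ν (Y ⁻¹' B ∩ s) * μ s₁ := by
    intro B hB
    rw [← ENNReal.mul_left_inj hs (measure_ne_top μ s)]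
    calc μ (Y ⁻¹' B ∩ s₁) * ν s * μ s = μ (Y ⁻¹' B ∩ s₁) * μ s * ν s := by ring
      _ = μ (Y ⁻¹' B ∩ s) * ν s * μ s₁ := by rw [hμ B hB]; ring
      _ = ν (Y ⁻¹' B ∩ s) * μ s₁ * μ s := by rw [hμν B hB]; ring
  have hνs : (ν s).toReal ≠ 0 := ENNReal.toReal_ne_zero.2 ⟨hν hs, measure_ne_top ν s⟩
  rw [condMean, mul_div_assoc', eq_div_iff hνs, mul_comm (μ s₁).toReal]
  exact setIntegral_mul_eq_of_measure_preimage_inter_mul hY hlaw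

variable {𝒳 : Type*} [Countable 𝒳] [MeasurableSpace 𝒳] [MeasurableSingletonClass 𝒳]
  {X : Ω → 𝒳}

theorem tsum_measure_inter_preimage_singleton (hX : Measurable X) {s : Set Ω}
    (hs : MeasurableSet s) : ∑' x, μ (s ∩ X ⁻¹' {x}) = μ s := by
  rw [← measure_iUnion (pairwise_disjoint_inter_preimage_singleton X s)
    (fun x => hs.inter (hX (measurableSet_singleton x))), iUnion_inter_preimage_singleton]

/-- The tower rule `E[Y | s] = ∑ₓ E[Y | s, X = x] P(X = x | s)`. -/
theorem hasSum_condMean_of_setIntegral_inter_preimage (hX : Measurable X) {s : Set Ω}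
    (hs : MeasurableSet s) (hY : IntegrableOn Y s μ) {m : 𝒳 → ℝ}
    (hm : ∀ x, ∫ ω in s ∩ X ⁻¹' {x}, Y ω ∂μ = (μ (s ∩ X ⁻¹' {x})).toReal * m x) :
    HasSum (fun x => m x * ((μ (s ∩ X ⁻¹' {x})).toReal / (μ s).toReal)) (condMean μ Y s) := by
  have hsum := hasSum_integral_iUnion (fun x => hs.inter (hX (measurableSet_singleton x)))
    (pairwise_disjoint_inter_preimage_singleton X s)
    (by rwa [iUnion_inter_preimage_singleton])
  rw [iUnion_inter_preimage_singleton] at hsum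
  simp only [hm] at hsum
  have hterm : ∀ x, m x * ((μ (s ∩ X ⁻¹' {x})).toReal / (μ s).toReal)
      = (μ (s ∩ X ⁻¹' {x})).toReal * m x / (μ s).toReal := fun x => by ring
  simpa only [hterm, condMean] using hsum.div_const (μ s).toReal

end General

section Model

variable {Ω 𝒳 : Type*} {Y : Ω → ℝ} {T To : Ω → Bool} {X : Ω → 𝒳}

theorem union_treat_cov_assign (t : Bool) (x : 𝒳) :
    {ω | T ω = t ∧ X ω = x ∧ To ω = true} ∪ {ω | T ω = t ∧ X ω = x ∧ To ω = false}
      = {ω | T ω = t ∧ X ω = x} := by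
  ext ω
  cases h : To ω <;> simp [h]

theorem disjoint_treat_cov_assign (t : Bool) (x : 𝒳) :
    Disjoint {ω | T ω = t ∧ X ω = x ∧ To ω = true} {ω | T ω = t ∧ X ω = x ∧ To ω = false} :=
  Set.disjoint_left.2 fun ω h₁ h₀ => by simp_all

theorem inter_preimage_treat_assign (t : Bool) (x : 𝒳) :
    {ω | T ω = t ∧ To ω = true} ∩ X ⁻¹' {x} = {ω | T ω = t ∧ X ω = x ∧ To ω = true} :=
  Set.ext fun _ => (and_right_comm.trans and_assoc :)

variable [MeasurableSpace Ω] {P_O P_E : Measure Ω}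

def ExtendedRandomization (P_E : Measure Ω) (T To : Ω → Bool) (X : Ω → 𝒳) : Prop :=
  ∀ (t t' : Bool) (x : 𝒳), P_E {ω | T ω = t ∧ To ω = t' ∧ X ω = x}
    = P_E {ω | T ω = t} * P_E {ω | To ω = t' ∧ X ω = x}

def ConditionalIgnorability (P_E : Measure Ω) (Y : Ω → ℝ) (T To : Ω → Bool) (X : Ω → 𝒳) :
    Prop :=
  ∀ B : Set ℝ, MeasurableSet B → ∀ (t : Bool) (x : 𝒳),
    P_E {ω | Y ω ∈ B ∧ T ω = t ∧ X ω = x ∧ To ω = true}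
        * P_E {ω | T ω = t ∧ X ω = x ∧ To ω = false}
      = P_E {ω | Y ω ∈ B ∧ T ω = t ∧ X ω = x ∧ To ω = false}
        * P_E {ω | T ω = t ∧ X ω = x ∧ To ω = true}

def OutcomeModularity (P_O P_E : Measure Ω) (Y : Ω → ℝ) (T : Ω → Bool) (X : Ω → 𝒳) : Prop :=
  ∀ B : Set ℝ, MeasurableSet B → ∀ (t : Bool) (x : 𝒳),
    P_E {ω | Y ω ∈ B ∧ T ω = t ∧ X ω = x} * P_O {ω | T ω = t ∧ X ω = x}
      = P_O {ω | Y ω ∈ B ∧ T ω = t ∧ X ω = x} * P_E {ω | T ω = t ∧ X ω = x}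

def AssignmentModularity (P_O P_E : Measure Ω) (To : Ω → Bool) (X : Ω → 𝒳) : Prop :=
  ∀ (t' : Bool) (x : 𝒳), P_E {ω | To ω = t' ∧ X ω = x} * P_O {ω | X ω = x}
    = P_O {ω | To ω = t' ∧ X ω = x} * P_E {ω | X ω = x}

def ObservationalPositivity (P_O : Measure Ω) (To : Ω → Bool) (X : Ω → 𝒳) : Prop :=
  ∀ x : 𝒳, 0 < P_O {ω | X ω = x} →
    0 < P_O {ω | To ω = true ∧ X ω = x} ∧ P_O {ω | To ω = true ∧ X ω = x} < P_O {ω | X ω = x}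

theorem measure_treat_cov_assign_eq [IsFiniteMeasure P_O]
    (hrand : ExtendedRandomization P_E T To X) (hmodTo : AssignmentModularity P_O P_E To X)
    (hmodX : ∀ x : 𝒳, P_E {ω | X ω = x} = P_O {ω | X ω = x}) (t : Bool) (x : 𝒳) (t' : Bool) :
    P_E {ω | T ω = t ∧ X ω = x ∧ To ω = t'}
      = P_E {ω | T ω = t} * P_O {ω | To ω = t' ∧ X ω = x} := by
  have hset : {ω | T ω = t ∧ X ω = x ∧ To ω = t'} = {ω | T ω = t ∧ To ω = t' ∧ X ω = x} := by
    ext ω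
    exact and_congr_right' and_comm
  rw [hset, hrand, measure_eq_of_mul_eq_of_subset (fun ω h => h.2) (hmodX x) (hmodTo t' x)]

theorem measure_treat_ne_zero [IsProbabilityMeasure P_E] (hT : Measurable T)
    (hposE : 0 < P_E {ω | T ω = true} ∧ P_E {ω | T ω = true} < 1) (t : Bool) :
    P_E {ω | T ω = t} ≠ 0 := by
  cases t
  · have hcompl : {ω | T ω = false} = {ω | T ω = true}ᶜ := by
      ext ω
      simp
    have hmeas : MeasurableSet {ω | T ω = true} := hT (measurableSet_singleton true)
    rw [hcompl, prob_compl_eq_one_sub hmeas]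
    exact (tsub_pos_of_lt hposE.2).ne'
  · exact hposE.1.ne'

theorem measure_assign_ne_zero [Countable 𝒳] [IsProbabilityMeasure P_O]
    (hposO : ObservationalPositivity P_O To X) :
    P_O {ω | To ω = true} ≠ 0 := by
  have hcover : ⋃ x, {ω | X ω = x} = Set.univ :=
    Set.iUnion_eq_univ_iff.2 fun ω => ⟨X ω, rfl⟩
  obtain ⟨x, hx⟩ : ∃ x, P_O {ω | X ω = x} ≠ 0 := by
    by_contra! h
    simpa [hcover] using measure_iUnion_null h
  exact fun h0 =>
    (hposO x (pos_iff_ne_zero.2 hx)).1.ne' (measure_mono_null (fun ω h => h.1) h0)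

variable [MeasurableSpace 𝒳] [MeasurableSingletonClass 𝒳]

theorem measurableSet_treat_cov_assign (hT : Measurable T) (hTo : Measurable To)
    (hX : Measurable X) (t : Bool) (x : 𝒳) (t' : Bool) :
    MeasurableSet {ω | T ω = t ∧ X ω = x ∧ To ω = t'} :=
  (hT (measurableSet_singleton t)).inter
    ((hX (measurableSet_singleton x)).inter (hTo (measurableSet_singleton t')))

theorem measurableSet_treat_assign (hT : Measurable T) (hTo : Measurable To) (t : Bool) :
    MeasurableSet {ω | T ω = t ∧ To ω = true} :=
  (hT (measurableSet_singleton t)).inter (hTo (measurableSet_singleton true))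

theorem measure_cov_eq_add (hTo : Measurable To) (hX : Measurable X) (x : 𝒳) :
    P_O {ω | X ω = x}
      = P_O {ω | To ω = true ∧ X ω = x} + P_O {ω | To ω = false ∧ X ω = x} := by
  have hunion :
      {ω | To ω = true ∧ X ω = x} ∪ {ω | To ω = false ∧ X ω = x} = {ω | X ω = x} := by
    ext ω
    cases h : To ω <;> simp [h]
  have hmeas : MeasurableSet {ω | To ω = false ∧ X ω = x} :=
    (hTo (measurableSet_singleton false)).inter (hX (measurableSet_singleton x))
  rw [← hunion, measure_union (Set.disjoint_left.2 fun ω h₁ h₀ => by simp_all) hmeas]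

theorem measure_treat_cov_eq [IsFiniteMeasure P_O] (hT : Measurable T) (hTo : Measurable To)
    (hX : Measurable X) (hrand : ExtendedRandomization P_E T To X)
    (hmodTo : AssignmentModularity P_O P_E To X)
    (hmodX : ∀ x : 𝒳, P_E {ω | X ω = x} = P_O {ω | X ω = x}) (t : Bool) (x : 𝒳) :
    P_E {ω | T ω = t ∧ X ω = x} = P_E {ω | T ω = t} * P_O {ω | X ω = x} := by
  rw [← union_treat_cov_assign, measure_union (disjoint_treat_cov_assign t x)
    (measurableSet_treat_cov_assign hT hTo hX t x false), measure_cov_eq_add hTo hX,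
    measure_treat_cov_assign_eq hrand hmodTo hmodX,
    measure_treat_cov_assign_eq hrand hmodTo hmodX, mul_add]

theorem measure_treat_cov_ne_zero [IsProbabilityMeasure P_O] (hT : Measurable T)
    (hTo : Measurable To) (hX : Measurable X) (hTTo : P_O {ω | T ω = To ω} = 1)
    (hposO : ObservationalPositivity P_O To X) (t : Bool) {x : 𝒳}
    (hx : P_O {ω | X ω = x} ≠ 0) :
    P_O {ω | T ω = t ∧ X ω = x} ≠ 0 := by
  have hae : ∀ᵐ ω ∂P_O, T ω = To ω := by
    rw [ae_iff_measure_eq (measurableSet_eq_fun hT hTo).nullMeasurableSet, hTTo, measure_univ]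
  have hcongr : P_O {ω | T ω = t ∧ X ω = x} = P_O {ω | To ω = t ∧ X ω = x} := by
    refine measure_congr (hae.mono fun ω h => ?_)
    change (T ω = t ∧ X ω = x) = (To ω = t ∧ X ω = x)
    rw [h]
  obtain ⟨hpos, hlt⟩ := hposO x (pos_iff_ne_zero.2 hx)
  rw [hcongr]
  cases t
  · intro h0
    rw [measure_cov_eq_add hTo hX, h0, add_zero] at hlt
    exact lt_irrefl _ hlt
  · exact hpos.ne'

theorem setIntegral_treat_cov_assign_eq [IsProbabilityMeasure P_O] [IsFiniteMeasure P_E]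
    (hY : Measurable Y) (hT : Measurable T) (hTo : Measurable To) (hX : Measurable X)
    (hTTo : P_O {ω | T ω = To ω} = 1) (hposO : ObservationalPositivity P_O To X)
    (hrand : ExtendedRandomization P_E T To X) (hign : ConditionalIgnorability P_E Y T To X)
    (hmodY : OutcomeModularity P_O P_E Y T X) (hmodTo : AssignmentModularity P_O P_E To X)
    (hmodX : ∀ x : 𝒳, P_E {ω | X ω = x} = P_O {ω | X ω = x}) (t : Bool) (x : 𝒳) :
    ∫ ω in {ω | T ω = t ∧ X ω = x ∧ To ω = true}, Y ω ∂P_E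
      = (P_E {ω | T ω = t ∧ X ω = x ∧ To ω = true}).toReal
        * condMean P_O Y {ω | T ω = t ∧ X ω = x} := by
  refine setIntegral_eq_toReal_mul_condMean hY (fun ω h => ⟨h.1, h.2.1⟩) (fun hE => ?_)
    (fun B hB => ?_) (fun B hB => hmodY B hB t x)
  · rw [measure_treat_cov_eq hT hTo hX hrand hmodTo hmodX] at hE
    exact measure_treat_cov_ne_zero hT hTo hX hTTo hposO t (right_ne_zero_of_mul hE)
  · rw [← union_treat_cov_assign t x]
    exact measure_preimage_inter_mul_union_eq hY hB (disjoint_treat_cov_assign t x)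
      (measurableSet_treat_cov_assign hT hTo hX t x false) (hign B hB t x)

variable [Countable 𝒳]

theorem measure_treat_assign_eq [IsFiniteMeasure P_O] (hT : Measurable T) (hTo : Measurable To)
    (hX : Measurable X) (hrand : ExtendedRandomization P_E T To X)
    (hmodTo : AssignmentModularity P_O P_E To X)
    (hmodX : ∀ x : 𝒳, P_E {ω | X ω = x} = P_O {ω | X ω = x}) (t : Bool) :
    P_E {ω | T ω = t ∧ To ω = true} = P_E {ω | T ω = t} * P_O {ω | To ω = true} := by
  have hassign : MeasurableSet {ω | To ω = true} := hTo (measurableSet_singleton true)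
  rw [← tsum_measure_inter_preimage_singleton hX (measurableSet_treat_assign hT hTo t),
    ← tsum_measure_inter_preimage_singleton hX hassign]
  simp only [inter_preimage_treat_assign, measure_treat_cov_assign_eq hrand hmodTo hmodX]
  exact ENNReal.tsum_mul_left

theorem hasSum_condMean_treat_assign [IsProbabilityMeasure P_O] [IsProbabilityMeasure P_E]
    (hY : Measurable Y) (hT : Measurable T) (hTo : Measurable To) (hX : Measurable X)
    (hYint : Integrable Y P_E) (hTTo : P_O {ω | T ω = To ω} = 1)
    (hposE : 0 < P_E {ω | T ω = true} ∧ P_E {ω | T ω = true} < 1)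
    (hposO : ObservationalPositivity P_O To X)
    (hrand : ExtendedRandomization P_E T To X) (hign : ConditionalIgnorability P_E Y T To X)
    (hmodY : OutcomeModularity P_O P_E Y T X) (hmodTo : AssignmentModularity P_O P_E To X)
    (hmodX : ∀ x : 𝒳, P_E {ω | X ω = x} = P_O {ω | X ω = x}) (t : Bool) :
    HasSum (fun x => condMean P_O Y {ω | T ω = t ∧ X ω = x}
        * ((P_O {ω | X ω = x ∧ To ω = true}).toReal / (P_O {ω | To ω = true}).toReal))
      (condMean P_E Y {ω | T ω = t ∧ To ω = true}) := by
  have hratio : ∀ x, (P_E ({ω | T ω = t ∧ To ω = true} ∩ X ⁻¹' {x})).toReal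
      / (P_E {ω | T ω = t ∧ To ω = true}).toReal
      = (P_O {ω | X ω = x ∧ To ω = true}).toReal / (P_O {ω | To ω = true}).toReal := by
    intro x
    have hpt : (P_E {ω | T ω = t}).toReal ≠ 0 :=
      ENNReal.toReal_ne_zero.2 ⟨measure_treat_ne_zero hT hposE t, measure_ne_top _ _⟩
    rw [inter_preimage_treat_assign, measure_treat_cov_assign_eq hrand hmodTo hmodX,
      measure_treat_assign_eq hT hTo hX hrand hmodTo hmodX, ENNReal.toReal_mul,
      ENNReal.toReal_mul, mul_div_mul_left _ _ hpt]
    rw [show {ω | X ω = x ∧ To ω = true} = {ω | To ω = true ∧ X ω = x} from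
      Set.ext fun _ => and_comm]
  have hcell : ∀ x, ∫ ω in {ω | T ω = t ∧ To ω = true} ∩ X ⁻¹' {x}, Y ω ∂P_E
      = (P_E ({ω | T ω = t ∧ To ω = true} ∩ X ⁻¹' {x})).toReal
        * condMean P_O Y {ω | T ω = t ∧ X ω = x} := by
    intro x
    rw [inter_preimage_treat_assign]
    exact setIntegral_treat_cov_assign_eq hY hT hTo hX hTTo hposO hrand hign hmodY hmodTo
      hmodX t x
  simpa only [hratio] using hasSum_condMean_of_setIntegral_inter_preimage hX
    (measurableSet_treat_assign hT hTo t) hYint.integrableOn hcell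

end Model

end TargetTrial

theorem att_identification_general
    {Ω : Type*} [MeasurableSpace Ω]
    {𝒳 : Type*} [Countable 𝒳] [MeasurableSpace 𝒳] [MeasurableSingletonClass 𝒳]
    (P_O P_E : Measure Ω) [IsProbabilityMeasure P_O] [IsProbabilityMeasure P_E]
    (Y : Ω → ℝ) (T To : Ω → Bool) (X : Ω → 𝒳)
    (hY : Measurable Y) (hT : Measurable T) (hTo : Measurable To) (hX : Measurable X)
    (hYintE : Integrable Y P_E)
    -- under `P_O`, `T = T^O` with probability one
    (hTTo : P_O {ω | T ω = To ω} = 1)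
    -- Positivity: `0 < P_E(T=1) < 1`
    (hposE : 0 < P_E {ω | T ω = true} ∧ P_E {ω | T ω = true} < 1)
    -- Positivity: `0 < P_O(T^O=1 | X=x) < 1` whenever `P_O(X=x) > 0`
    (hposO : ∀ x : 𝒳, 0 < P_O {ω | X ω = x} →
      0 < P_O {ω | To ω = true ∧ X ω = x} ∧
        P_O {ω | To ω = true ∧ X ω = x} < P_O {ω | X ω = x})
    -- Extended randomization: `T ⫫ (T^O, X)` under `P_E`
    (hrand : ∀ (t t' : Bool) (x : 𝒳),
      P_E {ω | T ω = t ∧ To ω = t' ∧ X ω = x}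
        = P_E {ω | T ω = t} * P_E {ω | To ω = t' ∧ X ω = x})
    -- Conditional ignorability: the conditional law of `Y` given `(T, X, T^O)` under `P_E`
    -- does not depend on `T^O` (cross-multiplied form)
    (hign : ∀ B : Set ℝ, MeasurableSet B → ∀ (t : Bool) (x : 𝒳),
      P_E {ω | Y ω ∈ B ∧ T ω = t ∧ X ω = x ∧ To ω = true}
          * P_E {ω | T ω = t ∧ X ω = x ∧ To ω = false}
        = P_E {ω | Y ω ∈ B ∧ T ω = t ∧ X ω = x ∧ To ω = false}
          * P_E {ω | T ω = t ∧ X ω = x ∧ To ω = true})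
    -- Extended modularity (cross-multiplied forms)
    (hmodY : ∀ B : Set ℝ, MeasurableSet B → ∀ (t : Bool) (x : 𝒳),
      P_E {ω | Y ω ∈ B ∧ T ω = t ∧ X ω = x} * P_O {ω | T ω = t ∧ X ω = x}
        = P_O {ω | Y ω ∈ B ∧ T ω = t ∧ X ω = x} * P_E {ω | T ω = t ∧ X ω = x})
    (hmodTo : ∀ (t' : Bool) (x : 𝒳),
      P_E {ω | To ω = t' ∧ X ω = x} * P_O {ω | X ω = x}
        = P_O {ω | To ω = t' ∧ X ω = x} * P_E {ω | X ω = x})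
    (hmodX : ∀ x : 𝒳, P_E {ω | X ω = x} = P_O {ω | X ω = x}) :
    (∫ ω in {ω | T ω = true ∧ To ω = true}, Y ω ∂P_E)
        / (P_E {ω | T ω = true ∧ To ω = true}).toReal
      - (∫ ω in {ω | T ω = false ∧ To ω = true}, Y ω ∂P_E)
        / (P_E {ω | T ω = false ∧ To ω = true}).toReal
    = ∑' x : 𝒳,
        ((∫ ω in {ω | T ω = true ∧ X ω = x}, Y ω ∂P_O)
            / (P_O {ω | T ω = true ∧ X ω = x}).toReal
          - (∫ ω in {ω | T ω = false ∧ X ω = x}, Y ω ∂P_O)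
            / (P_O {ω | T ω = false ∧ X ω = x}).toReal)
        * ((P_O {ω | X ω = x ∧ To ω = true}).toReal
            / (P_O {ω | To ω = true}).toReal) := by
  have harm := fun t => TargetTrial.hasSum_condMean_treat_assign hY hT hTo hX hYintE hTTo
    hposE hposO hrand hign hmodY hmodTo hmodX t
  simp_rw [sub_mul]
  exact ((harm true).sub (harm false)).tsum_eq.symm

theorem att_identification
    {Ω : Type*} [MeasurableSpace Ω]
    {𝒳 : Type*} [Countable 𝒳] [MeasurableSpace 𝒳] [MeasurableSingletonClass 𝒳]
    (P_O P_E : Measure Ω) [IsProbabilityMeasure P_O] [IsProbabilityMeasure P_E]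
    (Y : Ω → ℝ) (T To : Ω → Bool) (X : Ω → 𝒳)
    (hY : Measurable Y) (hT : Measurable T) (hTo : Measurable To) (hX : Measurable X)
    (hYintO : Integrable Y P_O) (hYintE : Integrable Y P_E)
    -- under `P_O`, `T = T^O` with probability one
    (hTTo : P_O {ω | T ω = To ω} = 1)
    -- Positivity: `0 < P_E(T=1) < 1`
    (hposE : 0 < P_E {ω | T ω = true} ∧ P_E {ω | T ω = true} < 1)
    -- Positivity: `0 < P_O(T^O=1 | X=x) < 1` whenever `P_O(X=x) > 0`
    (hposO : ∀ x : 𝒳, 0 < P_O {ω | X ω = x} →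
      0 < P_O {ω | To ω = true ∧ X ω = x} ∧
        P_O {ω | To ω = true ∧ X ω = x} < P_O {ω | X ω = x})
    -- Extended randomization: `T ⫫ (T^O, X)` under `P_E`
    (hrand : ∀ (t t' : Bool) (x : 𝒳),
      P_E {ω | T ω = t ∧ To ω = t' ∧ X ω = x}
        = P_E {ω | T ω = t} * P_E {ω | To ω = t' ∧ X ω = x})
    -- Conditional ignorability: the conditional law of `Y` given `(T, X, T^O)` under `P_E`
    -- does not depend on `T^O` (cross-multiplied form)
    (hign : ∀ B : Set ℝ, MeasurableSet B → ∀ (t : Bool) (x : 𝒳),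
      P_E {ω | Y ω ∈ B ∧ T ω = t ∧ X ω = x ∧ To ω = true}
          * P_E {ω | T ω = t ∧ X ω = x ∧ To ω = false}
        = P_E {ω | Y ω ∈ B ∧ T ω = t ∧ X ω = x ∧ To ω = false}
          * P_E {ω | T ω = t ∧ X ω = x ∧ To ω = true})
    -- Extended modularity (cross-multiplied forms)
    (hmodY : ∀ B : Set ℝ, MeasurableSet B → ∀ (t : Bool) (x : 𝒳),
      P_E {ω | Y ω ∈ B ∧ T ω = t ∧ X ω = x} * P_O {ω | T ω = t ∧ X ω = x}
        = P_O {ω | Y ω ∈ B ∧ T ω = t ∧ X ω = x} * P_E {ω | T ω = t ∧ X ω = x})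
    (hmodTo : ∀ (t' : Bool) (x : 𝒳),
      P_E {ω | To ω = t' ∧ X ω = x} * P_O {ω | X ω = x}
        = P_O {ω | To ω = t' ∧ X ω = x} * P_E {ω | X ω = x})
    (hmodX : ∀ x : 𝒳, P_E {ω | X ω = x} = P_O {ω | X ω = x}) :
    (∫ ω in {ω | T ω = true ∧ To ω = true}, Y ω ∂P_E)
        / (P_E {ω | T ω = true ∧ To ω = true}).toReal
      - (∫ ω in {ω | T ω = false ∧ To ω = true}, Y ω ∂P_E)
        / (P_E {ω | T ω = false ∧ To ω = true}).toReal
    = ∑' x : 𝒳,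
        ((∫ ω in {ω | T ω = true ∧ X ω = x}, Y ω ∂P_O)
            / (P_O {ω | T ω = true ∧ X ω = x}).toReal
          - (∫ ω in {ω | T ω = false ∧ X ω = x}, Y ω ∂P_O)
            / (P_O {ω | T ω = false ∧ X ω = x}).toReal)
        * ((P_O {ω | X ω = x ∧ To ω = true}).toReal
            / (P_O {ω | To ω = true}).toReal) :=
  att_identification_general P_O P_E Y T To X hY hT hTo hX hYintE hTTo hposE hposO hrand hign hmodY
    hmodTo hmodX

end
end

section
/- Conditional ignorability together with distributional consistency implies outcome modularity: if under P_E the outcome Y is conditionally independent of T^O given (T, X), and if for each t ∈ {0,1} the distributional consistency identity P_E(X=x, Y=y | T^O=t, T=t) = P_O(X=x, Y=y | T=t) holds for all x, y (the conditioning events having positive mass), then P_E(Y=y | T=t, X=x) = P_O(Y=y | T=t, X=x) for every t, x, y such that P_E(T=t, X=x) > 0 and P_O(T=t, X=x) > 0. -/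
/-!
Distributional consistency says that the masses `P_E (y, t, t, x)` are proportional to the
masses `P_O(Y = y, T = t, X = x)`, with a factor `P_E(T = t, T^O = t) / P_O(T = t)` that depends
on neither `x` nor `y`. Normalizing over `y` at fixed `x` therefore gives
`P_E(Y | T = t, T^O = t, X = x) = P_O(Y | T = t, X = x)`, and ignorability says that the extra
conditioning on `T^O = t` does not change the law of `Y` given `(T, X) = (t, x)` under `P_E`.
-/

open scoped BigOperators

noncomputable section

variable {𝒴 𝒳 : Type*} [Countable 𝒴] [Countable 𝒳]

theorem div_tsum_eq_div_tsum_of_eq_const_mul {ι K : Type*} [Field K] [TopologicalSpace K]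
    [IsTopologicalSemiring K] [T2Space K] {f g : ι → K} {k : K} (hk : k ≠ 0)
    (hfg : ∀ i, f i = k * g i) (i : ι) : f i / ∑' j, f j = g i / ∑' j, g j := by
  simp only [hfg, tsum_mul_left, mul_div_mul_left _ _ hk]

theorem ignorability_and_distributional_consistency_imply_modularity_general
    (P_O P_E : 𝒴 × Bool × Bool × 𝒳 → ℝ)
    -- the intermediate conditioning is well-defined
    (hwell : ∀ (t : Bool) (x : 𝒳), 0 < mTX P_E t x → 0 < mTToX P_E t t x)
    -- Conditional ignorability: `Y ⫫ T^O ∣ (T, X)` under `P_E` (cross-multiplied form)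
    (hign : ∀ (y : 𝒴) (t t' : Bool) (x : 𝒳),
      P_E (y, t, t', x) * mTX P_E t x = mYTX P_E y t x * mTToX P_E t t' x)
    -- the conditioning events of the distributional consistency identity have positive mass
    (hposE : ∀ t : Bool, 0 < mTTo P_E t t)
    (hposO : ∀ t : Bool, 0 < mT P_O t)
    -- Distributional consistency: `P_E(X=x, Y=y | T^O=t, T=t) = P_O(X=x, Y=y | T=t)`
    (hdc : ∀ (t : Bool) (x : 𝒳) (y : 𝒴),
      P_E (y, t, t, x) / mTTo P_E t t = mYTX P_O y t x / mT P_O t) :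
    ∀ (t : Bool) (x : 𝒳) (y : 𝒴),
      0 < mTX P_E t x → 0 < mTX P_O t x →
        mYTX P_E y t x / mTX P_E t x = mYTX P_O y t x / mTX P_O t x := by
  intro t x y hE _
  have hcond : mYTX P_E y t x / mTX P_E t x = P_E (y, t, t, x) / mTToX P_E t t x :=
    (div_eq_div_iff hE.ne' (hwell t x hE).ne').mpr (hign y t t x).symm
  have hprop : ∀ y, P_E (y, t, t, x) = mTTo P_E t t / mT P_O t * mYTX P_O y t x := fun y =>
    ((div_eq_iff (hposE t).ne').mp (hdc t x y)).trans (div_mul_comm _ _ _)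
  rw [hcond]
  -- `mTToX P_E t t x` and `mTX P_O t x` unfold to the sums over `y` of the two sides of `hprop`
  exact div_tsum_eq_div_tsum_of_eq_const_mul (div_ne_zero (hposE t).ne' (hposO t).ne') hprop y

theorem ignorability_and_distributional_consistency_imply_modularity
    (P_O P_E : 𝒴 × Bool × Bool × 𝒳 → ℝ)
    (hO_nonneg : ∀ z, 0 ≤ P_O z) (hO_sum : HasSum P_O 1)
    (hE_nonneg : ∀ z, 0 ≤ P_E z) (hE_sum : HasSum P_E 1)
    -- under `P_O`, `T = T^O` with probability one
    (hTTo : ∀ (y : 𝒴) (t t' : Bool) (x : 𝒳), t ≠ t' → P_O (y, t, t', x) = 0)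
    -- the intermediate conditioning is well-defined
    (hwell : ∀ (t : Bool) (x : 𝒳), 0 < mTX P_E t x → 0 < mTToX P_E t t x)
    -- Conditional ignorability: `Y ⫫ T^O ∣ (T, X)` under `P_E` (cross-multiplied form)
    (hign : ∀ (y : 𝒴) (t t' : Bool) (x : 𝒳),
      P_E (y, t, t', x) * mTX P_E t x = mYTX P_E y t x * mTToX P_E t t' x)
    -- the conditioning events of the distributional consistency identity have positive mass
    (hposE : ∀ t : Bool, 0 < mTTo P_E t t)
    (hposO : ∀ t : Bool, 0 < mT P_O t)
    -- Distributional consistency: `P_E(X=x, Y=y | T^O=t, T=t) = P_O(X=x, Y=y | T=t)`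
    (hdc : ∀ (t : Bool) (x : 𝒳) (y : 𝒴),
      P_E (y, t, t, x) / mTTo P_E t t = mYTX P_O y t x / mT P_O t) :
    ∀ (t : Bool) (x : 𝒳) (y : 𝒴),
      0 < mTX P_E t x → 0 < mTX P_O t x →
        mYTX P_E y t x / mTX P_E t x = mYTX P_O y t x / mTX P_O t x :=
  ignorability_and_distributional_consistency_imply_modularity_general P_O P_E hwell hign hposE
    hposO hdc

end
end

section
/- (Claim (I) in the proof of the extended g-formula theorem.) Suppose that under P_E the outcome Y is conditionally independent of T^O given (T, X), that P_E(Y=y | T=t, X=x) = P_O(Y=y | T=t, X=x) for all y, t, x (in cross-multiplied form), and that P_O({T = T^O}) = 1. Then Y is conditionally independent of the pair (T^O, regime) given (T, X): for all y, t, t', x with the relevant conditioning events of positive mass, P_E(Y=y | T=t, T^O=t', X=x) = P_O(Y=y | T=t, T^O=t', X=x) = P_O(Y=y | T=t, X=x). -/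
/-!
Extended discrete target-trial setup: `P_O` and `P_E` are probability mass functions on
`𝒴 × Bool × Bool × 𝒳` with coordinates `(Y, T, T^O, X)`; under `P_O` the event `{T = T^O}`
has probability 1.
STATEMENT 10 (Claim (I) in the proof of the extended g-formula theorem): if under `P_E` the
outcome `Y` is conditionally independent of `T^O` given `(T, X)`, if
`P_E(Y=y | T=t, X=x) = P_O(Y=y | T=t, X=x)` for all `y, t, x` (cross-multiplied form), and if
`P_O({T = T^O}) = 1`, then `Y` is conditionally independent of the pair `(T^O, regime)` given
`(T, X)`: for all `y, t, t', x` with the relevant conditioning events of positive mass,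
`P_E(Y=y | T=t, T^O=t', X=x) = P_O(Y=y | T=t, T^O=t', X=x) = P_O(Y=y | T=t, X=x)`.
-/

open scoped BigOperators

noncomputable section

variable {𝒴 𝒳 : Type*} [Countable 𝒴] [Countable 𝒳]

/-!
Positivity of `P_O(T = t, T^O = t', X = x)` forces `t = t'`, and on the diagonal conditioning
on `(T, T^O, X)` under `P_O` is the same as conditioning on `(T, X)`. Under `P_E`,
ignorability turns conditioning on `(T, T^O, X)` into conditioning on `(T, X)`, which outcome
modularity identifies with the `P_O` conditional. Ignorability also rules out
`P_E(T = t, X = x) = 0` while `P_E(T = t, T^O = t', X = x) > 0`, since then every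
`P_E(Y = y, T = t, X = x)` would vanish.
-/

section

variable {α β : Type*} {P : α × Bool × Bool × β → ℝ} {y : α} {t t' : Bool} {x : β}

theorem eq_of_mTToX_ne_zero (hP : ∀ y t t' x, t ≠ t' → P (y, t, t', x) = 0)
    (h : mTToX P t t' x ≠ 0) : t = t' := by
  by_contra hne
  exact h (by simp [mTToX, hP _ _ _ _ hne])

theorem mYTX_eq_of_offDiag_eq_zero (hP : ∀ y t t' x, t ≠ t' → P (y, t, t', x) = 0) :
    mYTX P y t x = P (y, t, t, x) := by
  rw [mYTX, tsum_bool]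
  cases t <;> simp [hP]

theorem mTX_eq_mTToX_of_offDiag_eq_zero (hP : ∀ y t t' x, t ≠ t' → P (y, t, t', x) = 0) :
    mTX P t x = mTToX P t t x :=
  tsum_congr fun _ => mYTX_eq_of_offDiag_eq_zero hP

theorem apply_le_mYTX (hP : ∀ z, 0 ≤ P z) : P (y, t, t', x) ≤ mYTX P y t x :=
  Summable.of_finite.le_tsum (f := fun s => P (y, t, s, x)) t' fun _ _ => hP _

theorem mTX_ne_zero_of_condIndep (hP : ∀ z, 0 ≤ P z)
    (hind : ∀ y, P (y, t, t', x) * mTX P t x = mYTX P y t x * mTToX P t t' x)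
    (h : mTToX P t t' x ≠ 0) : mTX P t x ≠ 0 := by
  intro hTX
  have hYTX (y : α) : mYTX P y t x = 0 := by
    have := hind y
    rw [hTX, mul_zero, eq_comm, mul_eq_zero] at this
    exact this.resolve_right h
  have hslice (y : α) : P (y, t, t', x) = 0 :=
    le_antisymm (hYTX y ▸ apply_le_mYTX hP) (hP _)
  exact h (by simp [mTToX, hslice])

end

theorem claim_I_conditional_independence_of_outcome_from_natural_assignment_and_regime_general
    (P_O P_E : 𝒴 × Bool × Bool × 𝒳 → ℝ)
    (hE_nonneg : ∀ z, 0 ≤ P_E z)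
    -- under `P_O`, `T = T^O` with probability one
    (hTTo : ∀ (y : 𝒴) (t t' : Bool) (x : 𝒳), t ≠ t' → P_O (y, t, t', x) = 0)
    -- Conditional ignorability: `Y ⫫ T^O ∣ (T, X)` under `P_E` (cross-multiplied form)
    (hign : ∀ (y : 𝒴) (t t' : Bool) (x : 𝒳),
      P_E (y, t, t', x) * mTX P_E t x = mYTX P_E y t x * mTToX P_E t t' x)
    -- Outcome modularity (cross-multiplied form):
    -- `P_E(Y=y | T=t, X=x) = P_O(Y=y | T=t, X=x)`
    (hmodY : ∀ (y : 𝒴) (t : Bool) (x : 𝒳),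
      mYTX P_E y t x * mTX P_O t x = mYTX P_O y t x * mTX P_E t x) :
    ∀ (y : 𝒴) (t t' : Bool) (x : 𝒳),
      0 < mTToX P_E t t' x → 0 < mTToX P_O t t' x → 0 < mTX P_O t x →
        P_E (y, t, t', x) / mTToX P_E t t' x = P_O (y, t, t', x) / mTToX P_O t t' x
        ∧ P_O (y, t, t', x) / mTToX P_O t t' x = mYTX P_O y t x / mTX P_O t x := by
  intro y t t' x hE hO hOTX
  obtain rfl := eq_of_mTToX_ne_zero hTTo hO.ne'
  have hETX := mTX_ne_zero_of_condIndep hE_nonneg (fun y => hign y t t x) hE.ne'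
  have hO_cond : mYTX P_O y t x / mTX P_O t x = P_O (y, t, t, x) / mTToX P_O t t x := by
    rw [mYTX_eq_of_offDiag_eq_zero hTTo, mTX_eq_mTToX_of_offDiag_eq_zero hTTo]
  refine ⟨?_, hO_cond.symm⟩
  calc P_E (y, t, t, x) / mTToX P_E t t x = mYTX P_E y t x / mTX P_E t x :=
        (div_eq_div_iff hE.ne' hETX).2 (hign y t t x)
    _ = mYTX P_O y t x / mTX P_O t x := (div_eq_div_iff hETX hOTX.ne').2 (hmodY y t x)
    _ = P_O (y, t, t, x) / mTToX P_O t t x := hO_cond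

theorem claim_I_conditional_independence_of_outcome_from_natural_assignment_and_regime
    (P_O P_E : 𝒴 × Bool × Bool × 𝒳 → ℝ)
    (hO_nonneg : ∀ z, 0 ≤ P_O z) (hO_sum : HasSum P_O 1)
    (hE_nonneg : ∀ z, 0 ≤ P_E z) (hE_sum : HasSum P_E 1)
    -- under `P_O`, `T = T^O` with probability one
    (hTTo : ∀ (y : 𝒴) (t t' : Bool) (x : 𝒳), t ≠ t' → P_O (y, t, t', x) = 0)
    -- Conditional ignorability: `Y ⫫ T^O ∣ (T, X)` under `P_E` (cross-multiplied form)
    (hign : ∀ (y : 𝒴) (t t' : Bool) (x : 𝒳),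
      P_E (y, t, t', x) * mTX P_E t x = mYTX P_E y t x * mTToX P_E t t' x)
    -- Outcome modularity (cross-multiplied form):
    -- `P_E(Y=y | T=t, X=x) = P_O(Y=y | T=t, X=x)`
    (hmodY : ∀ (y : 𝒴) (t : Bool) (x : 𝒳),
      mYTX P_E y t x * mTX P_O t x = mYTX P_O y t x * mTX P_E t x) :
    ∀ (y : 𝒴) (t t' : Bool) (x : 𝒳),
      0 < mTToX P_E t t' x → 0 < mTToX P_O t t' x → 0 < mTX P_O t x →
        P_E (y, t, t', x) / mTToX P_E t t' x = P_O (y, t, t', x) / mTToX P_O t t' x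
        ∧ P_O (y, t, t', x) / mTToX P_O t t' x = mYTX P_O y t x / mTX P_O t x :=
  claim_I_conditional_independence_of_outcome_from_natural_assignment_and_regime_general P_O P_E
    hE_nonneg hTTo hign hmodY

end
end

section
/- (Posterior predictive is a martingale.) Let A (parameters) and S (observations) be countable types, π a probability mass function on A, and p(· | α) a probability mass function on S for each α ∈ A. On a probability space let (θ, Z_1, Z_2, …) have the Bayesian joint law: θ has law π and, conditionally on θ, the Z_i are i.i.d. with law p(· | θ). For m ≥ 0 define the posterior π_m(α) = π(α) Π_{i=1}^m p(Z_i | α) / Σ_{α'} π(α') Π_{i=1}^m p(Z_i | α') (almost surely well-defined) and the posterior predictive P_m(z) = Σ_α p(z | α) π_m(α). Then for every z ∈ S and every m ≥ 1, E[P_m(z) | Z_1, …, Z_{m-1}] = P_{m-1}(z) almost surely. -/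
/-!
Let `m(v) = ∑_α π(α) ∏_i p(v_i | α)` be the marginal mass of a finite observation string `v`.
The joint law gives `P(Z_{<n} = v) = m(v)`, and on that event `P_n(z) = m(v z) / m(v)`, so the
integral of `P_n(z)` over `{Z_{<n} = v}` is `m(v z)`.  Splitting the same event by the value `s`
of the next observation, the integral of `P_{n+1}(z)` is `∑_s m(v s z) = ∑_s m(v z s) = m(v z)`:
the marginals are exchangeable and consistent.  As `σ(Z_{<n})` is generated by the countable
partition into the events `{Z_{<n} = v}`, this characterises the conditional expectation.
-/

open MeasureTheory

noncomputable section

section CountablyValued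

variable {Ω β E : Type*} {mΩ : MeasurableSpace Ω} {μ : Measure Ω}
  [MeasurableSpace β] [MeasurableSingletonClass β] [Countable β] {X : Ω → β}
  [NormedAddCommGroup E] [NormedSpace ℝ E]

theorem setIntegral_eq_tsum_setIntegral_inter_preimage_singleton (hX : Measurable X)
    {s : Set Ω} (hs : MeasurableSet s) {f : Ω → E} (hf : IntegrableOn f s μ) :
    ∫ ω in s, f ω ∂μ = ∑' b, ∫ ω in s ∩ X ⁻¹' {b}, f ω ∂μ := by
  have hcover : s = ⋃ b, s ∩ X ⁻¹' {b} := by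
    ext ω
    simp
  have hdisj : Pairwise (Function.onFun Disjoint fun b => s ∩ X ⁻¹' {b}) :=
    fun b b' hbb' => ((Set.disjoint_singleton.2 hbb').preimage X).mono
      Set.inter_subset_right Set.inter_subset_right
  conv_lhs => rw [hcover]
  exact integral_iUnion (fun b => hs.inter (hX (measurableSet_singleton b))) hdisj
    (hcover ▸ hf)

theorem condExp_comap_ae_eq_of_setIntegral_preimage_singleton_eq [CompleteSpace E]
    [IsFiniteMeasure μ] (hX : Measurable X) {f : Ω → E} {g : β → E} (hf : Integrable f μ)
    (hg : Integrable (g ∘ X) μ)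
    (h : ∀ b, ∫ ω in X ⁻¹' {b}, f ω ∂μ = ∫ ω in X ⁻¹' {b}, g (X ω) ∂μ) :
    μ[f | MeasurableSpace.comap X ‹_›] =ᵐ[μ] g ∘ X := by
  refine (ae_eq_condExp_of_forall_setIntegral_eq hX.comap_le hf
    (fun _ _ _ => hg.integrableOn) (fun s hs _ => ?_)
    (StronglyMeasurable.of_discrete.comp_measurable
      (comap_measurable X)).aestronglyMeasurable).symm
  obtain ⟨t, ht, rfl⟩ := hs
  rw [setIntegral_eq_tsum_setIntegral_inter_preimage_singleton hX (hX ht) hg.integrableOn,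
    setIntegral_eq_tsum_setIntegral_inter_preimage_singleton hX (hX ht) hf.integrableOn]
  refine tsum_congr fun b => ?_
  by_cases hb : b ∈ t
  · rw [Set.inter_eq_right.2 (Set.preimage_mono (Set.singleton_subset_iff.2 hb)), h b]
    rfl
  · rw [← Set.preimage_inter, Set.inter_singleton_eq_empty.2 hb, Set.preimage_empty,
      setIntegral_empty, setIntegral_empty]

end CountablyValued

section BayesianModel

variable {A S : Type*} (π : A → ℝ) (p : S → A → ℝ)

def jointMass {n : ℕ} (v : Fin n → S) (a : A) : ℝ := π a * ∏ i, p (v i) a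

def marginalMass {n : ℕ} (v : Fin n → S) : ℝ := ∑' a, jointMass π p v a

def predictive {n : ℕ} (v : Fin n → S) (z : S) : ℝ :=
  marginalMass π p (Fin.snoc v z) / marginalMass π p v

variable {π p}

theorem jointMass_snoc {n : ℕ} (v : Fin n → S) (s : S) (a : A) :
    jointMass π p (Fin.snoc v s) a = jointMass π p v a * p s a := by
  simp only [jointMass, Fin.prod_univ_castSucc, Fin.snoc_castSucc, Fin.snoc_last, mul_assoc]

theorem marginalMass_snoc_snoc_comm {n : ℕ} (v : Fin n → S) (s z : S) :
    marginalMass π p (Fin.snoc (Fin.snoc v s) z)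
      = marginalMass π p (Fin.snoc (Fin.snoc v z) s) := by
  simp only [marginalMass, jointMass_snoc, mul_right_comm]

theorem predictive_eq_tsum_mul_div {n : ℕ} (v : Fin n → S) (z : S) :
    predictive π p v z = ∑' a, p z a * (jointMass π p v a / marginalMass π p v) := by
  simp only [predictive, marginalMass, jointMass_snoc, ← tsum_div_const]
  exact tsum_congr fun a => by ring

theorem jointMass_nonneg (hπ0 : ∀ a, 0 ≤ π a) (hp0 : ∀ s a, 0 ≤ p s a) {n : ℕ}
    (v : Fin n → S) (a : A) : 0 ≤ jointMass π p v a :=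
  mul_nonneg (hπ0 a) (Finset.prod_nonneg fun _ _ => hp0 _ a)

theorem jointMass_le (hπ0 : ∀ a, 0 ≤ π a) (hp0 : ∀ s a, 0 ≤ p s a)
    (hp : ∀ a, HasSum (p · a) 1) {n : ℕ} (v : Fin n → S) (a : A) : jointMass π p v a ≤ π a :=
  mul_le_of_le_one_right (hπ0 a) (Finset.prod_le_one (fun _ _ => hp0 _ a)
    fun i _ => le_hasSum (hp a) (v i) fun s _ => hp0 s a)

theorem summable_jointMass (hπ0 : ∀ a, 0 ≤ π a) (hπ : Summable π) (hp0 : ∀ s a, 0 ≤ p s a)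
    (hp : ∀ a, HasSum (p · a) 1) {n : ℕ} (v : Fin n → S) : Summable (jointMass π p v) :=
  hπ.of_nonneg_of_le (jointMass_nonneg hπ0 hp0 v) (jointMass_le hπ0 hp0 hp v)

theorem marginalMass_nonneg (hπ0 : ∀ a, 0 ≤ π a) (hp0 : ∀ s a, 0 ≤ p s a) {n : ℕ}
    (v : Fin n → S) : 0 ≤ marginalMass π p v :=
  tsum_nonneg (jointMass_nonneg hπ0 hp0 v)

theorem marginalMass_snoc_le (hπ0 : ∀ a, 0 ≤ π a) (hπ : Summable π) (hp0 : ∀ s a, 0 ≤ p s a)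
    (hp : ∀ a, HasSum (p · a) 1) {n : ℕ} (v : Fin n → S) (z : S) :
    marginalMass π p (Fin.snoc v z) ≤ marginalMass π p v := by
  refine Summable.tsum_le_tsum (fun a => ?_) (summable_jointMass hπ0 hπ hp0 hp _)
    (summable_jointMass hπ0 hπ hp0 hp v)
  rw [jointMass_snoc]
  exact mul_le_of_le_one_right (jointMass_nonneg hπ0 hp0 v a)
    (le_hasSum (hp a) z fun s _ => hp0 s a)

theorem predictive_mul_marginalMass (hπ0 : ∀ a, 0 ≤ π a) (hπ : Summable π)
    (hp0 : ∀ s a, 0 ≤ p s a) (hp : ∀ a, HasSum (p · a) 1) {n : ℕ} (v : Fin n → S) (z : S) :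
    predictive π p v z * marginalMass π p v = marginalMass π p (Fin.snoc v z) := by
  rcases (marginalMass_nonneg hπ0 hp0 v).eq_or_lt with h0 | hpos
  · rw [← h0, mul_zero]
    exact le_antisymm (marginalMass_nonneg hπ0 hp0 _)
      (h0 ▸ marginalMass_snoc_le hπ0 hπ hp0 hp v z)
  · exact div_mul_cancel₀ _ hpos.ne'

theorem tsum_tsum_mul_of_hasSum_one {w : A → ℝ} (hw0 : ∀ a, 0 ≤ w a) (hw : Summable w)
    (hp0 : ∀ s a, 0 ≤ p s a) (hp : ∀ a, HasSum (p · a) 1) :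
    ∑' s, ∑' a, w a * p s a = ∑' a, w a := by
  have hrow : ∀ a, HasSum (fun s => w a * p s a) (w a) := fun a => by
    simpa using (hp a).mul_left (w a)
  have hprod : Summable (Function.uncurry fun a s => w a * p s a) :=
    (summable_prod_of_nonneg fun _ => mul_nonneg (hw0 _) (hp0 _ _)).2
      ⟨fun a => (hrow a).summable, hw.congr fun a => (hrow a).tsum_eq.symm⟩
  rw [hprod.tsum_comm]
  exact tsum_congr fun a => (hrow a).tsum_eq

theorem tsum_marginalMass_snoc (hπ0 : ∀ a, 0 ≤ π a) (hπ : Summable π) (hp0 : ∀ s a, 0 ≤ p s a)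
    (hp : ∀ a, HasSum (p · a) 1) {n : ℕ} (v : Fin n → S) :
    ∑' s, marginalMass π p (Fin.snoc v s) = marginalMass π p v := by
  simp only [marginalMass, jointMass_snoc]
  exact tsum_tsum_mul_of_hasSum_one (jointMass_nonneg hπ0 hp0 v)
    (summable_jointMass hπ0 hπ hp0 hp v) hp0 hp

theorem predictive_nonneg (hπ0 : ∀ a, 0 ≤ π a) (hp0 : ∀ s a, 0 ≤ p s a) {n : ℕ}
    (v : Fin n → S) (z : S) : 0 ≤ predictive π p v z :=
  div_nonneg (marginalMass_nonneg hπ0 hp0 _) (marginalMass_nonneg hπ0 hp0 v)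

theorem predictive_le_one (hπ0 : ∀ a, 0 ≤ π a) (hπ : Summable π) (hp0 : ∀ s a, 0 ≤ p s a)
    (hp : ∀ a, HasSum (p · a) 1) {n : ℕ} (v : Fin n → S) (z : S) : predictive π p v z ≤ 1 :=
  div_le_one_of_le₀ (marginalMass_snoc_le hπ0 hπ hp0 hp v z) (marginalMass_nonneg hπ0 hp0 v)

end BayesianModel

section Observations

variable {Ω A S : Type*} {Z : ℕ → Ω → S}

def observations (Z : ℕ → Ω → S) (n : ℕ) (ω : Ω) : Fin n → S := fun i => Z i ω

theorem observations_succ (n : ℕ) (ω : Ω) :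
    observations Z (n + 1) ω = Fin.snoc (observations Z n ω) (Z n ω) := by
  ext i
  refine Fin.lastCases ?_ (fun _ => ?_) i <;> simp [observations]

theorem measurable_observations [MeasurableSpace Ω] [MeasurableSpace S]
    (hZ : ∀ i, Measurable (Z i)) (n : ℕ) : Measurable (observations Z n) :=
  measurable_pi_lambda _ fun i => hZ i

theorem iSup_comap_eq_comap_observations [MeasurableSpace S] (n : ℕ) :
    ⨆ i ∈ Set.Iio n, MeasurableSpace.comap (Z i) ‹_›
      = MeasurableSpace.comap (observations Z n) MeasurableSpace.pi := by
  simp only [MeasurableSpace.pi, MeasurableSpace.comap_iSup, MeasurableSpace.comap_comp]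
  exact le_antisymm (iSup₂_le fun i hi => le_iSup_of_le ⟨i, hi⟩ le_rfl)
    (iSup_le fun i => le_iSup₂_of_le (i : ℕ) i.isLt le_rfl)

theorem integrable_predictive_observations [MeasurableSpace Ω] [MeasurableSpace S]
    [MeasurableSingletonClass S] [Countable S] {P : Measure Ω} [IsFiniteMeasure P]
    {π : A → ℝ} {p : S → A → ℝ} (hZ : ∀ i, Measurable (Z i)) (hπ0 : ∀ a, 0 ≤ π a) (hπ : Summable π)
    (hp0 : ∀ s a, 0 ≤ p s a) (hp : ∀ a, HasSum (p · a) 1) (n : ℕ) (z : S) :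
    Integrable (fun ω => predictive π p (observations Z n ω) z) P := by
  refine .of_bound ((StronglyMeasurable.of_discrete (f := (predictive π p · z))).comp_measurable
    (measurable_observations hZ n)).aestronglyMeasurable 1 (.of_forall fun ω => ?_)
  rw [Real.norm_of_nonneg (predictive_nonneg hπ0 hp0 _ z)]
  exact predictive_le_one hπ0 hπ hp0 hp _ z

end Observations

section BayesianJointLaw

variable {Ω A S : Type*} [MeasurableSpace Ω] [MeasurableSpace A] [MeasurableSingletonClass A]
  [Countable A] [MeasurableSpace S] [MeasurableSingletonClass S] {P : Measure Ω}
  {θ : Ω → A} {Z : ℕ → Ω → S} {π : A → ℝ} {p : S → A → ℝ}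

theorem measureReal_preimage_observations [IsFiniteMeasure P] [Nonempty S]
    (hθ : Measurable θ) (hZ : ∀ i, Measurable (Z i))
    (hjoint : ∀ (m : ℕ) (a : A) (f : ℕ → S),
      (P {ω | θ ω = a ∧ ∀ i < m, Z i ω = f i}).toReal = π a * ∏ i ∈ Finset.range m, p (f i) a)
    {n : ℕ} (v : Fin n → S) :
    P.real (observations Z n ⁻¹' {v}) = marginalMass π p v := by
  set f : ℕ → S := Function.extend Fin.val v fun _ => Classical.arbitrary S
  have hf : ∀ i (hi : i < n), f i = v ⟨i, hi⟩ := fun i hi =>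
    Fin.val_injective.extend_apply v _ ⟨i, hi⟩
  have hslice : ∀ a, {ω | θ ω = a ∧ ∀ i < n, Z i ω = f i}
      = θ ⁻¹' {a} ∩ observations Z n ⁻¹' {v} := by
    intro a
    ext ω
    simp +contextual [observations, funext_iff, Fin.forall_iff, hf]
  have hcover : observations Z n ⁻¹' {v} = ⋃ a, θ ⁻¹' {a} ∩ observations Z n ⁻¹' {v} := by
    ext ω
    simp
  have hdisj :
      Pairwise (Function.onFun Disjoint fun a => θ ⁻¹' {a} ∩ observations Z n ⁻¹' {v}) :=
    fun a b hab => ((Set.disjoint_singleton.2 hab).preimage θ).mono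
      Set.inter_subset_left Set.inter_subset_left
  have hmeas : ∀ a, MeasurableSet (θ ⁻¹' {a} ∩ observations Z n ⁻¹' {v}) := fun a =>
    (hθ (measurableSet_singleton a)).inter
      (measurable_observations hZ n (measurableSet_singleton v))
  rw [measureReal_def, hcover, measure_iUnion hdisj hmeas,
    ENNReal.tsum_toReal_eq fun _ => measure_ne_top P _]
  refine tsum_congr fun a => ?_
  rw [← hslice, hjoint, jointMass, ← Fin.prod_univ_eq_prod_range]
  simp only [Fin.is_lt, hf]

theorem setIntegral_predictive_preimage_observations [IsFiniteMeasure P] [Nonempty S]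
    (hθ : Measurable θ) (hZ : ∀ i, Measurable (Z i))
    (hjoint : ∀ (m : ℕ) (a : A) (f : ℕ → S),
      (P {ω | θ ω = a ∧ ∀ i < m, Z i ω = f i}).toReal = π a * ∏ i ∈ Finset.range m, p (f i) a)
    (hπ0 : ∀ a, 0 ≤ π a) (hπ : Summable π) (hp0 : ∀ s a, 0 ≤ p s a)
    (hp : ∀ a, HasSum (p · a) 1) {n : ℕ} (v : Fin n → S) (z : S) :
    ∫ ω in observations Z n ⁻¹' {v}, predictive π p (observations Z n ω) z ∂P
      = marginalMass π p (Fin.snoc v z) := by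
  have hfiber : Set.EqOn (fun ω => predictive π p (observations Z n ω) z)
      (fun _ => predictive π p v z) (observations Z n ⁻¹' {v}) :=
    fun _ hω => congrArg (predictive π p · z) hω
  rw [setIntegral_congr_fun (measurable_observations hZ n (measurableSet_singleton v)) hfiber,
    setIntegral_const, measureReal_preimage_observations hθ hZ hjoint, smul_eq_mul, mul_comm,
    predictive_mul_marginalMass hπ0 hπ hp0 hp]

theorem setIntegral_predictive_succ_preimage_observations [IsFiniteMeasure P] [Countable S]
    [Nonempty S] (hθ : Measurable θ) (hZ : ∀ i, Measurable (Z i))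
    (hjoint : ∀ (m : ℕ) (a : A) (f : ℕ → S),
      (P {ω | θ ω = a ∧ ∀ i < m, Z i ω = f i}).toReal = π a * ∏ i ∈ Finset.range m, p (f i) a)
    (hπ0 : ∀ a, 0 ≤ π a) (hπ : Summable π) (hp0 : ∀ s a, 0 ≤ p s a)
    (hp : ∀ a, HasSum (p · a) 1) {n : ℕ} (v : Fin n → S) (z : S) :
    ∫ ω in observations Z n ⁻¹' {v}, predictive π p (observations Z (n + 1) ω) z ∂P
      = marginalMass π p (Fin.snoc v z) := by
  have hslice : ∀ s, observations Z n ⁻¹' {v} ∩ Z n ⁻¹' {s}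
      = observations Z (n + 1) ⁻¹' {Fin.snoc v s} := fun s => by
    ext ω
    simp [observations_succ, Fin.snoc_inj]
  calc ∫ ω in observations Z n ⁻¹' {v}, predictive π p (observations Z (n + 1) ω) z ∂P
      = ∑' s, ∫ ω in observations Z (n + 1) ⁻¹' {Fin.snoc v s},
          predictive π p (observations Z (n + 1) ω) z ∂P := by
        rw [setIntegral_eq_tsum_setIntegral_inter_preimage_singleton (hZ n)
          (measurable_observations hZ n (measurableSet_singleton v))
          (integrable_predictive_observations hZ hπ0 hπ hp0 hp (n + 1) z).integrableOn]
        simp only [hslice]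
    _ = ∑' s, marginalMass π p (Fin.snoc (Fin.snoc v z) s) := tsum_congr fun s => by
        rw [setIntegral_predictive_preimage_observations hθ hZ hjoint hπ0 hπ hp0 hp,
          marginalMass_snoc_snoc_comm]
    _ = marginalMass π p (Fin.snoc v z) := tsum_marginalMass_snoc hπ0 hπ hp0 hp _

end BayesianJointLaw

theorem posterior_predictive_is_martingale
    {Ω : Type*} [MeasurableSpace Ω]
    {A S : Type*} [Countable A] [Countable S]
    [MeasurableSpace A] [MeasurableSingletonClass A]
    [MeasurableSpace S] [MeasurableSingletonClass S]
    (P : Measure Ω) [IsProbabilityMeasure P]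
    (θ : Ω → A) (Z : ℕ → Ω → S)
    (hθ : Measurable θ) (hZ : ∀ i, Measurable (Z i))
    -- the prior pmf and the likelihood pmfs
    (π : A → ℝ) (p : S → A → ℝ)
    (hπ_nonneg : ∀ a, 0 ≤ π a) (hπ_sum : HasSum π 1)
    (hp_nonneg : ∀ z a, 0 ≤ p z a) (hp_sum : ∀ a, HasSum (fun z => p z a) 1)
    -- Bayesian joint law: `θ ∼ π` and, given `θ`, the `Z_i` are i.i.d. with law `p(· | θ)`
    (hjoint : ∀ (m : ℕ) (a : A) (f : ℕ → S),
      (P {ω | θ ω = a ∧ ∀ i < m, Z i ω = f i}).toReal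
        = π a * ∏ i ∈ Finset.range m, p (f i) a)
    -- the posterior
    (πm : ℕ → A → Ω → ℝ)
    (hπm : ∀ m a ω,
      πm m a ω = π a * (∏ i ∈ Finset.range m, p (Z i ω) a)
        / ∑' a' : A, π a' * ∏ i ∈ Finset.range m, p (Z i ω) a')
    -- the posterior predictive
    (Pm : ℕ → S → Ω → ℝ)
    (hPm : ∀ m z ω, Pm m z ω = ∑' a : A, p z a * πm m a ω) :
    ∀ (z : S) (m : ℕ), 1 ≤ m →
      P[Pm m z | ⨆ i ∈ Set.Iio (m - 1), MeasurableSpace.comap (Z i) inferInstance]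
        =ᵐ[P] Pm (m - 1) z := by
  intro z m hm
  obtain ⟨n, rfl⟩ := Nat.exists_eq_add_of_le' hm
  have : Nonempty S := ⟨Z 0 (nonempty_of_isProbabilityMeasure P).some⟩
  have hPm_eq : ∀ k, Pm k z = (predictive π p · z) ∘ observations Z k := fun k => by
    funext ω
    simp only [hPm, hπm, Function.comp_apply, predictive_eq_tsum_mul_div, marginalMass,
      jointMass, observations, Finset.prod_range]
  rw [Nat.add_sub_cancel, iSup_comap_eq_comap_observations, hPm_eq, hPm_eq]
  refine condExp_comap_ae_eq_of_setIntegral_preimage_singleton_eq (measurable_observations hZ n)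
    (integrable_predictive_observations hZ hπ_nonneg hπ_sum.summable hp_nonneg hp_sum (n + 1) z)
    (integrable_predictive_observations hZ hπ_nonneg hπ_sum.summable hp_nonneg hp_sum n z)
    fun v => ?_
  simp only [Function.comp_apply]
  rw [setIntegral_predictive_succ_preimage_observations hθ hZ hjoint hπ_nonneg hπ_sum.summable
      hp_nonneg hp_sum, setIntegral_predictive_preimage_observations hθ hZ hjoint hπ_nonneg
      hπ_sum.summable hp_nonneg hp_sum]

end
end

section
/- (Consistency of the Hájek estimator / posterior mean.) Let (Y_i, T_i, X_i), i ≥ 1, be i.i.d. with common law P_O, where Y_i is real-valued, T_i ∈ {0,1}, X_i takes values in a countable type 𝒳, and suppose ε < π(X_1) < 1 − ε almost surely for some ε ∈ (0, 1/2), where π(x) = P_O(T=1 | X=x), and E_{P_O}[Y² ] < ∞. Let μ_0 = Σ_x E_{P_O}[Y | T=1, X=x] P_O(X=x). Then (1/n) Σ_{i=1}^n T_i/π(X_i) → 1 in probability, and the Hájek estimator ( Σ_{i=1}^n T_i Y_i / π(X_i) ) / ( Σ_{i=1}^n T_i / π(X_i) ) converges in probability to μ_0 as n → ∞ (with any fixed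 convention for the value when the denominator is zero, an event whose probability tends to zero). -/
/-!
Both estimators are built from the empirical means of `T/π(X)` and `T Y/π(X)`, which by the strong
law of large numbers converge almost surely, hence in probability, to their expectations. These
are computed fibre by fibre: the integral of `T h/π(X)` over `{X = x}` is the integral of `h` over
`{T = 1, X = x}` multiplied by `P(X = x)/P(T = 1, X = x)`. Summing over `x` gives `μ₀` for
`h = Y`, and `∑ P(X = x) = 1` for `h = 1`, because `π > 0` on every fibre of positive mass.
-/

open MeasureTheory
open scoped BigOperators ENNReal

noncomputable section

/-- The propensity score `π(x) = μ(T=1 | X=x)` of a law `μ` on `ℝ × Bool × 𝒳`. -/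
def propLaw {𝒳 : Type*} [MeasurableSpace 𝒳] (μ : Measure (ℝ × Bool × 𝒳)) (x : 𝒳) : ℝ :=
  (μ {p | p.2.1 = true ∧ p.2.2 = x}).toReal / (μ {p | p.2.2 = x}).toReal

open ProbabilityTheory Filter Topology

theorem Filter.Eventually.of_measure_fiber_ne_zero {α β : Type*} [MeasurableSpace α]
    {μ : Measure α} {f : α → β} {Q : β → Prop} (h : ∀ᵐ a ∂μ, Q (f a)) {b : β}
    (hb : μ {a | f a = b} ≠ 0) : Q b := by
  by_contra hQ
  exact hb (measure_mono_null (fun a (ha : f a = b) hQa => hQ (ha ▸ hQa)) (ae_iff.1 h))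

theorem integral_eq_tsum_setIntegral_preimage_singleton {α β E : Type*} [MeasurableSpace α]
    [MeasurableSpace β] [Countable β] [MeasurableSingletonClass β] [NormedAddCommGroup E]
    [NormedSpace ℝ E] {μ : Measure α} {f : α → β} (hf : Measurable f) {F : α → E}
    (hF : Integrable F μ) : ∫ a, F a ∂μ = ∑' b, ∫ a in f ⁻¹' {b}, F a ∂μ := by
  rw [← integral_iUnion (fun b => hf (measurableSet_singleton b))
    (fun b c hbc => Set.disjoint_singleton.2 hbc |>.preimage f) (by simpa using hF.integrableOn),
    ← Set.preimage_iUnion, Set.iUnion_singleton_eq_range, Set.range_id', Set.preimage_univ,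
    setIntegral_univ]

theorem Filter.Tendsto.div_of_div_natCast {u v : ℕ → ℝ} {a b : ℝ}
    (hu : Tendsto (fun n => u n / n) atTop (𝓝 a)) (hv : Tendsto (fun n => v n / n) atTop (𝓝 b))
    (hb : b ≠ 0) : Tendsto (fun n => u n / v n) atTop (𝓝 (a / b)) := by
  refine (hu.div hv hb).congr' ?_
  filter_upwards [eventually_ne_atTop 0] with n hn
  exact div_div_div_cancel_right₀ (Nat.cast_ne_zero.2 hn) _ _

section StrongLaw

variable {Ω α : Type*} [MeasurableSpace Ω] [MeasurableSpace α] {P : Measure Ω} {μ : Measure α}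
  {Z : ℕ → Ω → α} (hZ : ∀ i, Measurable (Z i)) (hindep : Pairwise fun i j => Z i ⟂ᵢ[P] Z j)
  (hlaw : ∀ i, P.map (Z i) = μ)
include hZ hindep hlaw

theorem ae_tendsto_sum_comp_div {F : α → ℝ} (hF : Measurable F) (hFint : Integrable F μ) :
    ∀ᵐ ω ∂P, Tendsto (fun n : ℕ => (∑ i ∈ Finset.range n, F (Z i ω)) / n) atTop
      (𝓝 (∫ a, F a ∂μ)) := by
  have hident (i : ℕ) : IdentDistrib (F ∘ Z i) (F ∘ Z 0) P P :=
    IdentDistrib.comp ⟨(hZ i).aemeasurable, (hZ 0).aemeasurable, by rw [hlaw, hlaw]⟩ hF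
  rw [← hlaw 0] at hFint ⊢
  rw [integral_map (hZ 0).aemeasurable (hlaw 0 ▸ hF.aestronglyMeasurable)]
  exact strong_law_ae_real (fun i => F ∘ Z i)
    ((integrable_map_measure hF.aestronglyMeasurable (hZ 0).aemeasurable).1 hFint)
    (fun i j hij => (hindep hij).comp hF hF) hident

variable [IsFiniteMeasure P]

theorem tendstoInMeasure_sum_comp_div {F : α → ℝ} (hF : Measurable F)
    (hFint : Integrable F μ) :
    TendstoInMeasure P (fun (n : ℕ) ω => (∑ i ∈ Finset.range n, F (Z i ω)) / n) atTop
      (fun _ => ∫ a, F a ∂μ) := by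
  refine tendstoInMeasure_of_tendsto_ae (fun _ => ?_)
    (ae_tendsto_sum_comp_div hZ hindep hlaw hF hFint)
  exact ((Finset.measurable_sum _ fun i _ => hF.comp (hZ i)).div_const _).aestronglyMeasurable

theorem tendstoInMeasure_sum_comp_div_sum_comp {F G : α → ℝ} (hF : Measurable F)
    (hFint : Integrable F μ) (hG : Measurable G) (hGint : Integrable G μ)
    (hG0 : ∫ a, G a ∂μ ≠ 0) :
    TendstoInMeasure P
      (fun (n : ℕ) ω => (∑ i ∈ Finset.range n, F (Z i ω)) / ∑ i ∈ Finset.range n, G (Z i ω))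
      atTop (fun _ => (∫ a, F a ∂μ) / ∫ a, G a ∂μ) := by
  refine tendstoInMeasure_of_tendsto_ae (fun _ => ?_) ?_
  · exact ((Finset.measurable_sum _ fun i _ => hF.comp (hZ i)).div
      (Finset.measurable_sum _ fun i _ => hG.comp (hZ i))).aestronglyMeasurable
  filter_upwards [ae_tendsto_sum_comp_div hZ hindep hlaw hF hFint,
    ae_tendsto_sum_comp_div hZ hindep hlaw hG hGint] with ω hFω hGω
  exact hFω.div_of_div_natCast hGω hG0

end StrongLaw

section InversePropensityWeighting

variable {𝒳 : Type*} [MeasurableSpace 𝒳] {μ : Measure (ℝ × Bool × 𝒳)}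

/-- The inverse-propensity-weighted observation `T h(Y, T, X) / π(X)`. -/
def ipw (μ : Measure (ℝ × Bool × 𝒳)) (h : ℝ × Bool × 𝒳 → ℝ) (p : ℝ × Bool × 𝒳) : ℝ :=
  if p.2.1 = true then h p / propLaw μ p.2.2 else 0

theorem measurableSet_treated : MeasurableSet {p : ℝ × Bool × 𝒳 | p.2.1 = true} :=
  measurable_snd.fst (measurableSet_singleton true)

variable [MeasurableSingletonClass 𝒳]

theorem measurable_ipw [Countable 𝒳] {h : ℝ × Bool × 𝒳 → ℝ} (hh : Measurable h) :
    Measurable (ipw μ h) :=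
  Measurable.ite measurableSet_treated
    (hh.div ((measurable_of_countable (propLaw μ)).comp measurable_snd.snd)) measurable_const

theorem integrable_ipw [Countable 𝒳] {h : ℝ × Bool × 𝒳 → ℝ} (hh : Measurable h)
    (hhint : Integrable h μ) {ε : ℝ} (hε : 0 < ε) (hπ : ∀ᵐ p ∂μ, ε < propLaw μ p.2.2) :
    Integrable (ipw μ h) μ := by
  refine (hhint.norm.div_const ε).mono' (measurable_ipw hh).aestronglyMeasurable ?_
  filter_upwards [hπ] with p hp
  unfold ipw
  split_ifs
  · rw [norm_div, Real.norm_of_nonneg (hε.trans hp).le]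
    exact div_le_div_of_nonneg_left (norm_nonneg _) hε hp.le
  · simp only [norm_zero]; positivity

theorem setIntegral_ipw_fiber (h : ℝ × Bool × 𝒳 → ℝ) (x : 𝒳) :
    ∫ p in {p | p.2.2 = x}, ipw μ h p ∂μ
      = (∫ p in {p | p.2.1 = true ∧ p.2.2 = x}, h p ∂μ) / propLaw μ x := by
  have hfiber : MeasurableSet {p : ℝ × Bool × 𝒳 | p.2.2 = x} :=
    measurable_snd.snd (measurableSet_singleton x)
  rw [setIntegral_congr_fun hfiber
      (g := {p | p.2.1 = true}.indicator fun p => h p / propLaw μ x),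
    setIntegral_indicator measurableSet_treated, Set.inter_comm, ← Set.ofPred_and, integral_div]
  rintro p (rfl : p.2.2 = x)
  simp [ipw, Set.indicator]

theorem integral_ipw [Countable 𝒳] {h : ℝ × Bool × 𝒳 → ℝ} (hint : Integrable (ipw μ h) μ) :
    ∫ p, ipw μ h p ∂μ = ∑' x, (∫ p in {p | p.2.1 = true ∧ p.2.2 = x}, h p ∂μ)
      / (μ {p | p.2.1 = true ∧ p.2.2 = x}).toReal * (μ {p | p.2.2 = x}).toReal := by
  rw [integral_eq_tsum_setIntegral_preimage_singleton measurable_snd.snd hint]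
  refine tsum_congr fun x => (setIntegral_ipw_fiber h x).trans ?_
  rw [propLaw, div_div_eq_mul_div, div_mul_eq_mul_div]

theorem integral_ipw_one [Countable 𝒳] [IsProbabilityMeasure μ]
    (hint : Integrable (ipw μ fun _ => 1) μ) (hπ : ∀ᵐ p ∂μ, 0 < propLaw μ p.2.2) :
    ∫ p, ipw μ (fun _ => 1) p ∂μ = 1 := by
  have hfiber (x : 𝒳) :
      ∫ p in {p | p.2.2 = x}, ipw μ (fun _ => 1) p ∂μ = ∫ _ in {p | p.2.2 = x}, (1 : ℝ) ∂μ := by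
    rw [setIntegral_ipw_fiber, setIntegral_const, setIntegral_const, smul_eq_mul, smul_eq_mul,
      mul_one, mul_one, propLaw, measureReal_def, measureReal_def]
    by_cases hx : μ {p | p.2.2 = x} = 0
    · have hA : μ {p | p.2.1 = true ∧ p.2.2 = x} = 0 := measure_mono_null (fun p hp => hp.2) hx
      simp [hA, hx]
    · have hpos : 0 < propLaw μ x := hπ.of_measure_fiber_ne_zero
        (f := fun p : ℝ × Bool × 𝒳 => p.2.2) (Q := (0 < propLaw μ ·)) hx
      exact div_div_cancel₀ fun hA => hpos.ne' (by rw [propLaw, hA, zero_div])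
  calc ∫ p, ipw μ (fun _ => 1) p ∂μ = ∫ _, (1 : ℝ) ∂μ := by
        rw [integral_eq_tsum_setIntegral_preimage_singleton measurable_snd.snd hint,
          integral_eq_tsum_setIntegral_preimage_singleton measurable_snd.snd (integrable_const 1)]
        exact tsum_congr hfiber
    _ = 1 := by simp

end InversePropensityWeighting

theorem hajek_estimator_consistency
    {Ω : Type*} [MeasurableSpace Ω]
    {𝒳 : Type*} [Countable 𝒳] [MeasurableSpace 𝒳] [MeasurableSingletonClass 𝒳]
    (P : Measure Ω) [IsProbabilityMeasure P]
    (Z : ℕ → Ω → ℝ × Bool × 𝒳)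
    (hZmeas : ∀ i, Measurable (Z i))
    -- independence
    (hindep : ProbabilityTheory.iIndepFun Z P)
    -- identical distribution with common law `μO`
    (μO : Measure (ℝ × Bool × 𝒳)) [IsProbabilityMeasure μO]
    (hlaw : ∀ i, Measure.map (Z i) P = μO)
    (ε : ℝ) (hε : 0 < ε ∧ ε < 1 / 2)
    -- `ε < π(X) < 1 − ε` almost surely
    (hπ : ∀ᵐ p ∂μO, ε < propLaw μO p.2.2 ∧ propLaw μO p.2.2 < 1 - ε)
    -- `E[Y²] < ∞`
    (hY2 : Integrable (fun p : ℝ × Bool × 𝒳 => p.1 ^ 2) μO)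
    (μ0 : ℝ)
    -- `μ₀ = ∑_x E[Y | T=1, X=x] P_O(X=x)`
    (hμ0 : μ0 = ∑' x : 𝒳,
      ((∫ p in {p : ℝ × Bool × 𝒳 | p.2.1 = true ∧ p.2.2 = x}, p.1 ∂μO)
          / (μO {p : ℝ × Bool × 𝒳 | p.2.1 = true ∧ p.2.2 = x}).toReal)
        * (μO {p : ℝ × Bool × 𝒳 | p.2.2 = x}).toReal) :
    -- `(1/n) ∑_{i=1}^n T_i/π(X_i) → 1` in probability
    MeasureTheory.TendstoInMeasure P
      (fun (n : ℕ) ω => (1 / (n : ℝ)) * ∑ i ∈ Finset.range n,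
        (if (Z i ω).2.1 = true then 1 / propLaw μO (Z i ω).2.2 else 0))
      Filter.atTop (fun _ => 1)
    -- the Hájek estimator converges in probability to `μ₀`
    ∧ MeasureTheory.TendstoInMeasure P
        (fun (n : ℕ) ω =>
          (∑ i ∈ Finset.range n,
            (if (Z i ω).2.1 = true then (Z i ω).1 / propLaw μO (Z i ω).2.2 else 0))
          / ∑ i ∈ Finset.range n,
            (if (Z i ω).2.1 = true then 1 / propLaw μO (Z i ω).2.2 else 0))
        Filter.atTop (fun _ => μ0) := by
  have hπε : ∀ᵐ p ∂μO, ε < propLaw μO p.2.2 := hπ.mono fun _ hp => hp.1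
  have hpos : ∀ᵐ p ∂μO, 0 < propLaw μO p.2.2 := hπε.mono fun _ => hε.1.trans
  have hY : Integrable (fun p : ℝ × Bool × 𝒳 => p.1) μO :=
    ((memLp_two_iff_integrable_sq measurable_fst.aestronglyMeasurable).2 hY2).integrable
      one_le_two
  have hw := integrable_ipw measurable_const (integrable_const 1) hε.1 hπε
  have hwY := integrable_ipw measurable_fst hY hε.1 hπε
  have hpair : Pairwise fun i j => Z i ⟂ᵢ[P] Z j := fun _ _ hij => hindep.indepFun hij
  constructor
  · have hlim :=
      tendstoInMeasure_sum_comp_div hZmeas hpair hlaw (measurable_ipw measurable_const) hw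
    rw [integral_ipw_one hw hpos] at hlim
    simp_rw [one_div_mul_eq_div]
    exact hlim
  · have hlim := tendstoInMeasure_sum_comp_div_sum_comp hZmeas hpair hlaw
      (measurable_ipw measurable_fst) hwY (measurable_ipw measurable_const) hw
      (by rw [integral_ipw_one hw hpos]; exact one_ne_zero)
    rwa [integral_ipw hwY, integral_ipw_one hw hpos, div_one, ← hμ0] at hlim

end
end
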